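/- arXiv:1610.00517 — 9 statements merged into one kernel-verified Lean document; each statement's English description precedes it below -/
import Mathlib

section
/- Let H be a real Hilbert space and T : H → H a nonexpansive map whose fixed point set Fix(T) is nonempty. Let κ, η > 0 and let F : H → H satisfy ‖F(x) − F(y)‖ ≤ κ‖x − y‖ and ⟨F(x) − F(y), x − y⟩ ≥ η‖x − y‖² for all x, y in the range of T. Fix μ ∈ (0, 2η/κ²) and a sequence (λ_n) ⊆ (0,1] with λ_n → 0, Σ_{n=1}^∞ λ_n = ∞ and (λ_n − λ_{n+1})/λ_n² → 0. Then for any u₀ ∈ H, the sequence defined by u_{n+1} := T(u_n) − λ_{n+1}·μ·F(T(u_n)) converges strongly to the unique point u* ∈ Fix(T) satisfying ⟨v − u*, F(u*)⟩ ≥ 0 for all v ∈ Fix(T); in particular such a point u* exists and is unique. -/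
/-!
For `l ∈ [0, 1]` the map `x ↦ x - (l μ) • F x` is a `(1 - l c)`-contraction on the range of `T`
for some `c > 0`, because `F` is Lipschitz and strongly monotone there. The fixed point set `K` of
the nonexpansive map `T` is closed and convex, so composing this contraction (with `l = 1`) with
the metric projection onto `K` and applying Banach's fixed point theorem yields a solution `u*` of
the variational inequality; strong monotonicity makes it unique.

Convergence rests on Xu's lemma: `aₙ₊₁ ≤ (1 - αₙ) aₙ + αₙ βₙ` with `∑ αₙ = ∞` and
`limsup βₙ ≤ 0` forces `aₙ → 0`. Applied to `‖uₙ₊₁ - uₙ‖`, with the condition on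
`(λₙ - λₙ₊₁) / λₙ²`, it gives `‖uₙ - T uₙ‖ → 0`. By weak sequential compactness and the
demiclosedness of `I - T` every weak cluster point of `(uₙ)` lies in `K`, so the variational
inequality gives `limsup ⟪uₙ - u*, -F u*⟫ ≤ 0`, and Xu's lemma applied to `‖uₙ - u*‖²`
concludes.
-/

open scoped RealInnerProductSpace Topology NNReal
open Filter Function

theorem le_add_exp_neg_sum_mul_of_le_one_sub_mul_add_mul {a α : ℕ → ℝ} {ε : ℝ} {N : ℕ} (hε : 0 ≤ ε)
    (ha : ∀ n, 0 ≤ a n) (hα : ∀ n, α n ∈ Set.Icc (0 : ℝ) 1)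
    (hrec : ∀ n ≥ N, a (n + 1) ≤ (1 - α n) * a n + α n * ε) :
    ∀ n ≥ N, a n ≤ ε + Real.exp (-∑ i ∈ Finset.Ico N n, α i) * a N := by
  intro n hn
  induction n, hn using Nat.le_induction with
  | base => simpa using hε
  | succ n hn ih =>
    have hexp : 1 - α n ≤ Real.exp (-α n) := by linarith [Real.add_one_le_exp (-α n)]
    have hE : 0 ≤ Real.exp (-∑ i ∈ Finset.Ico N n, α i) * a N := by positivity [ha N]
    rw [Finset.sum_Ico_succ_top hn, neg_add, Real.exp_add]
    calc a (n + 1) ≤ (1 - α n) * (ε + Real.exp (-∑ i ∈ Finset.Ico N n, α i) * a N) + α n * ε :=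
          (hrec n hn).trans (by gcongr; linarith [(hα n).2])
      _ ≤ ε + Real.exp (-α n) * (Real.exp (-∑ i ∈ Finset.Ico N n, α i) * a N) := by
          nlinarith [mul_le_mul_of_nonneg_right hexp hE]
      _ = _ := by ring

/-- Xu's lemma -/
theorem tendsto_zero_of_le_one_sub_mul_add_mul {a α β : ℕ → ℝ} (ha : ∀ n, 0 ≤ a n)
    (hα : ∀ n, α n ∈ Set.Icc (0 : ℝ) 1) (hαsum : ¬ Summable α)
    (hrec : ∀ n, a (n + 1) ≤ (1 - α n) * a n + α n * β n)
    (hβ : ∀ ε > 0, ∀ᶠ n in atTop, β n ≤ ε) :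
    Tendsto a atTop (𝓝 0) := by
  refine tendsto_order.2 ⟨fun b hb => Eventually.of_forall fun n => hb.trans_le (ha n),
    fun ε hε => ?_⟩
  obtain ⟨N, hN⟩ := (hβ (ε / 2) (half_pos hε)).exists_forall_of_atTop
  have hbound := le_add_exp_neg_sum_mul_of_le_one_sub_mul_add_mul (half_pos hε).le ha hα
    fun n hn => (hrec n).trans (by gcongr; exacts [(hα n).1, hN n hn])
  have hsum : Tendsto (fun n => ∑ i ∈ Finset.Ico N n, α i) atTop atTop := by
    have := (not_summable_iff_tendsto_nat_atTop_of_nonneg fun n => (hα n).1).1 hαsum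
    refine (tendsto_atTop_add_const_right _ (-∑ i ∈ Finset.range N, α i) this).congr' ?_
    filter_upwards [eventually_ge_atTop N] with n hn
    rw [Finset.sum_Ico_eq_sub _ hn, sub_eq_add_neg]
  have hexp : Tendsto (fun n => Real.exp (-∑ i ∈ Finset.Ico N n, α i) * a N) atTop (𝓝 0) := by
    simpa using (Real.tendsto_exp_atBot.comp (tendsto_neg_atTop_atBot.comp hsum)).mul_const (a N)
  filter_upwards [eventually_ge_atTop N, (tendsto_order.1 hexp).2 (ε / 2) (half_pos hε)]
    with n hn hsmall
  linarith [hbound n hn]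

theorem tendsto_sub_div_succ_of_tendsto_sub_div_sq {lam : ℕ → ℝ} (hpos : ∀ n, 0 < lam n)
    (hlam : Tendsto lam atTop (𝓝 0))
    (hratio : Tendsto (fun n => (lam n - lam (n + 1)) / lam n ^ 2) atTop (𝓝 0)) :
    Tendsto (fun n => (lam n - lam (n + 1)) / lam (n + 1)) atTop (𝓝 0) := by
  have hr : Tendsto (fun n => (lam n - lam (n + 1)) / lam n) atTop (𝓝 0) := by
    have h := hratio.mul hlam
    rw [zero_mul] at h
    refine h.congr fun n => ?_
    field_simp [(hpos n).ne']
  have h := hr.div ((tendsto_const_nhds (x := (1 : ℝ))).sub hr) (by norm_num)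
  rw [sub_zero, zero_div] at h
  refine h.congr fun n => ?_
  rw [Pi.div_apply, one_sub_div (hpos n).ne', sub_sub_cancel,
    div_div_div_cancel_right₀ (hpos n).ne']

theorem not_summable_of_tendsto_sum_atTop {ι : Type*} {f : ι → ℝ} (hf : ∀ i, 0 ≤ f i)
    {s : ℕ → Finset ι} (h : Tendsto (fun n => ∑ i ∈ s n, f i) atTop atTop) : ¬ Summable f :=
  fun hs =>
    let ⟨_, hn⟩ := (h.eventually_gt_atTop (∑' i, f i)).exists
    (hn.trans_le (hs.sum_le_tsum _ fun i _ => hf i)).false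

section NormedAddCommGroup

variable {E : Type*} [NormedAddCommGroup E] {T : E → E}

theorem fixedPoints_eq_iInter_of_nonexpansive (hT : ∀ x y, ‖T x - T y‖ ≤ ‖x - y‖) :
    fixedPoints T = ⋂ y, {x | ‖x - T y‖ ≤ ‖x - y‖} := by
  ext x
  simp only [Set.mem_iInter, Set.mem_ofPred_eq]
  refine ⟨fun hx y => ?_, fun h => ?_⟩
  · calc ‖x - T y‖ = ‖T x - T y‖ := by rw [hx]
      _ ≤ ‖x - y‖ := hT x y
  · exact (sub_eq_zero.1 (norm_le_zero_iff.1 (by simpa using h x))).symm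

theorem isClosed_fixedPoints_of_nonexpansive (hT : ∀ x y, ‖T x - T y‖ ≤ ‖x - y‖) :
    IsClosed (fixedPoints T) := by
  rw [fixedPoints_eq_iInter_of_nonexpansive hT]
  exact isClosed_iInter fun y => isClosed_le (by fun_prop) (by fun_prop)

end NormedAddCommGroup

section InnerProductSpace

variable {H : Type*} [NormedAddCommGroup H] [InnerProductSpace ℝ H]

theorem convex_setOf_norm_sub_le_norm_sub (a b : H) :
    Convex ℝ {x : H | ‖x - a‖ ≤ ‖x - b‖} := by
  have h : {x : H | ‖x - a‖ ≤ ‖x - b‖} = {x | 2 * ⟪x, b - a⟫ ≤ ‖b‖ ^ 2 - ‖a‖ ^ 2} := by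
    ext x
    rw [Set.mem_ofPred_eq, Set.mem_ofPred_eq, ← sq_le_sq₀ (norm_nonneg _) (norm_nonneg _),
      norm_sub_sq_real, norm_sub_sq_real, inner_sub_right]
    constructor <;> intro h <;> linarith
  rw [h]
  exact convex_halfSpace_le ⟨fun x y => by rw [inner_add_left, mul_add],
    fun r x => by rw [real_inner_smul_left, smul_eq_mul]; ring⟩ _

theorem convex_fixedPoints_of_nonexpansive {T : H → H} (hT : ∀ x y, ‖T x - T y‖ ≤ ‖x - y‖) :
    Convex ℝ (fixedPoints T) := by
  rw [fixedPoints_eq_iInter_of_nonexpansive hT]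
  exact convex_iInter fun y => convex_setOf_norm_sub_le_norm_sub _ _

theorem norm_sub_le_of_forall_inner_sub_le_zero {K : Set H} {z z' v v' : H} (hv : v ∈ K)
    (hv' : v' ∈ K) (h : ∀ w ∈ K, ⟪z - v, w - v⟫ ≤ 0) (h' : ∀ w ∈ K, ⟪z' - v', w - v'⟫ ≤ 0) :
    ‖v - v'‖ ≤ ‖z - z'‖ := by
  have hsum : ⟪z - v, v' - v⟫ + ⟪z' - v', v - v'⟫ = ‖v - v'‖ ^ 2 - ⟪z - z', v - v'⟫ := by
    rw [← real_inner_self_eq_norm_sq]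
    simp only [inner_sub_left, inner_sub_right, real_inner_comm]
    ring
  have hsq : ‖v - v'‖ ^ 2 ≤ ‖z - z'‖ * ‖v - v'‖ := by
    linarith [h v' hv', h' v hv, real_inner_le_norm (z - z') (v - v')]
  nlinarith [norm_nonneg (v - v'), norm_nonneg (z - z')]

theorem exists_mem_forall_inner_nonneg_of_contraction [CompleteSpace H] {K : Set H}
    (hne : K.Nonempty) (hcl : IsClosed K) (hconv : Convex ℝ K) {F : H → H} {μ : ℝ} {q : ℝ≥0}
    (hμ : 0 < μ) (hq : q < 1)
    (hcontr : ∀ x ∈ K, ∀ y ∈ K, ‖(x - μ • F x) - (y - μ • F y)‖ ≤ q * ‖x - y‖) :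
    ∃ u ∈ K, ∀ v ∈ K, 0 ≤ ⟪v - u, F u⟫ := by
  have hproj (z : H) : ∃ v ∈ K, ∀ w ∈ K, ⟪z - v, w - v⟫ ≤ 0 := by
    obtain ⟨v, hv, hmin⟩ := exists_norm_eq_iInf_of_complete_convex hne hcl.isComplete hconv z
    exact ⟨v, hv, (norm_eq_iInf_iff_real_inner_le_zero hconv hv).1 hmin⟩
  choose P hPK hP using hproj
  have : CompleteSpace K := hcl.completeSpace_coe
  have : Nonempty K := hne.to_subtype
  let S : K → K := fun x => ⟨P (x - μ • F x), hPK _⟩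
  have hS : ContractingWith q S := by
    refine ⟨hq, LipschitzWith.of_dist_le_mul fun x y => ?_⟩
    rw [Subtype.dist_eq, Subtype.dist_eq, dist_eq_norm, dist_eq_norm]
    exact (norm_sub_le_of_forall_inner_sub_le_zero (hPK _) (hPK _) (hP _) (hP _)).trans
      (hcontr x x.2 y y.2)
  obtain ⟨⟨u, huK⟩, hu⟩ : ∃ x, S x = x := ⟨_, ContractingWith.fixedPoint_isFixedPt hS⟩
  replace hu : P (u - μ • F u) = u := congrArg Subtype.val hu
  refine ⟨u, huK, fun v hv => ?_⟩
  have := hP (u - μ • F u) v hv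
  rw [hu, sub_sub_cancel_left, inner_neg_left, real_inner_smul_left, real_inner_comm] at this
  nlinarith

theorem eq_of_forall_inner_nonneg_of_strongly_monotone {K : Set H} {F : H → H} {η : ℝ}
    (hη : 0 < η) (hmon : ∀ x ∈ K, ∀ y ∈ K, η * ‖x - y‖ ^ 2 ≤ ⟪F x - F y, x - y⟫)
    {u w : H} (hu : u ∈ K) (hw : w ∈ K) (hu' : ∀ v ∈ K, 0 ≤ ⟪v - u, F u⟫)
    (hw' : ∀ v ∈ K, 0 ≤ ⟪v - w, F w⟫) : u = w := by
  have h := hmon u hu w hw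
  have hwu := hw' u hu
  have huw := hu' w hw
  rw [inner_sub_left, real_inner_comm (u - w) (F u), real_inner_comm (u - w) (F w)] at h
  rw [← neg_sub, inner_neg_left] at huw
  have : ‖u - w‖ ^ 2 = 0 := le_antisymm (by nlinarith) (sq_nonneg _)
  exact norm_sub_eq_zero_iff.1 (pow_eq_zero_iff two_ne_zero |>.1 this)

theorem exists_pos_forall_norm_sub_smul_sub_sub_smul_le {s : Set H} {F : H → H} {κ η μ : ℝ}
    (hFlip : ∀ x ∈ s, ∀ y ∈ s, ‖F x - F y‖ ≤ κ * ‖x - y‖)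
    (hFmon : ∀ x ∈ s, ∀ y ∈ s, η * ‖x - y‖ ^ 2 ≤ ⟪F x - F y, x - y⟫)
    (hμ : 0 < μ) (hμκ : μ * κ ^ 2 < 2 * η) :
    ∃ c > 0, c ≤ 1 ∧ ∀ l ∈ Set.Icc (0 : ℝ) 1, ∀ x ∈ s, ∀ y ∈ s,
      ‖(x - (l * μ) • F x) - (y - (l * μ) • F y)‖ ≤ (1 - l * c) * ‖x - y‖ := by
  -- The squared factor is at most `1 - l θ` with `θ = μ (2η - μκ²)`, and `1 - 2lc ≤ (1 - lc)²`.
  have hθ : 0 < μ * (2 * η - μ * κ ^ 2) := mul_pos hμ (by linarith)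
  obtain ⟨c, hc0, hcθ, hc1⟩ : ∃ c > 0, c ≤ μ * (2 * η - μ * κ ^ 2) / 2 ∧ c ≤ 1 / 2 :=
    ⟨min (μ * (2 * η - μ * κ ^ 2)) 1 / 2, by positivity,
      by linarith [min_le_left (μ * (2 * η - μ * κ ^ 2)) 1],
      by linarith [min_le_right (μ * (2 * η - μ * κ ^ 2)) 1]⟩
  refine ⟨c, hc0, by linarith, fun l ⟨hl0, hl1⟩ x hx y hy => ?_⟩
  have hF : ‖F x - F y‖ ^ 2 ≤ κ ^ 2 * ‖x - y‖ ^ 2 := by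
    rw [← mul_pow]; exact pow_le_pow_left₀ (norm_nonneg _) (hFlip x hx y hy) 2
  have hexpand : ‖(x - (l * μ) • F x) - (y - (l * μ) • F y)‖ ^ 2
      = ‖x - y‖ ^ 2 - 2 * (l * μ) * ⟪F x - F y, x - y⟫ + (l * μ) ^ 2 * ‖F x - F y‖ ^ 2 := by
    rw [show (x - (l * μ) • F x) - (y - (l * μ) • F y) = (x - y) - (l * μ) • (F x - F y) by
      module, norm_sub_sq_real, real_inner_smul_right, norm_smul, mul_pow, Real.norm_eq_abs,
      sq_abs, real_inner_comm]
    ring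
  refine (pow_le_pow_iff_left₀ (norm_nonneg _) (mul_nonneg (by nlinarith) (norm_nonneg _))
    two_ne_zero).1 ?_
  rw [hexpand]
  have hl2 : l ^ 2 ≤ l := by nlinarith
  nlinarith [mul_le_mul_of_nonneg_left (hFmon x hx y hy) (by positivity : 0 ≤ 2 * (l * μ)),
    mul_le_mul_of_nonneg_left hF (by positivity : 0 ≤ (l * μ) ^ 2),
    mul_le_mul_of_nonneg_right hl2 (by positivity : 0 ≤ μ ^ 2 * κ ^ 2 * ‖x - y‖ ^ 2),
    mul_le_mul_of_nonneg_right hcθ (by positivity : 0 ≤ l * ‖x - y‖ ^ 2),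
    sq_nonneg (l * c * ‖x - y‖)]

theorem exists_strictMono_forall_tendsto_inner_of_norm_le [CompleteSpace H] {x : ℕ → H} {C : ℝ}
    (hx : ∀ n, ‖x n‖ ≤ C) :
    ∃ (z : H) (φ : ℕ → ℕ), StrictMono φ ∧
      ∀ y : H, Tendsto (fun k => ⟪x (φ k), y⟫) atTop (𝓝 ⟪z, y⟫) := by
  -- Sequential Banach–Alaoglu in the (separable) closed span of the sequence.
  set D := (Submodule.span ℝ (Set.range x)).topologicalClosure
  have : CompleteSpace D := (Submodule.isClosed_topologicalClosure _).completeSpace_coe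
  have : TopologicalSpace.SeparableSpace D :=
    (Set.countable_range x).isSeparable.span.closure.separableSpace
  let ψ : ℕ → WeakDual ℝ D := fun n => StrongDual.toWeakDual <| InnerProductSpace.toDual ℝ D
    ⟨x n, Submodule.le_topologicalClosure _ (Submodule.subset_span ⟨n, rfl⟩)⟩
  have hψ : ∀ n, ψ n ∈ WeakDual.toStrongDual ⁻¹' Metric.closedBall 0 C := fun n =>
    mem_closedBall_zero_iff.2 (((InnerProductSpace.toDual ℝ D).norm_map _).trans_le (hx n))
  obtain ⟨a, -, φ, hφ, ha⟩ := WeakDual.isSeqCompact_closedBall ℝ D 0 C hψ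
  refine ⟨(InnerProductSpace.toDual ℝ D).symm (WeakDual.toStrongDual a), φ, hφ, fun y => ?_⟩
  have hy := tendsto_iff_forall_eval_tendsto_topDualPairing.1 ha (D.orthogonalProjectionOnto y)
  rw [← Submodule.inner_orthogonalProjectionOnto_eq_of_mem_left,
    InnerProductSpace.toDual_symm_apply]
  exact hy.congr fun k => Submodule.inner_orthogonalProjectionOnto_eq_of_mem_left _ _

variable {T : H → H}

/-- Demiclosedness principle -/
theorem isFixedPt_of_tendsto_inner_of_tendsto_norm_sub_apply
    (hT : ∀ x y, ‖T x - T y‖ ≤ ‖x - y‖) {v : ℕ → H} {z : H} {C : ℝ} (hC : ∀ k, ‖v k - z‖ ≤ C)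
    (hweak : ∀ y, Tendsto (fun k => ⟪v k, y⟫) atTop (𝓝 ⟪z, y⟫))
    (hasym : Tendsto (fun k => ‖v k - T (v k)‖) atTop (𝓝 0)) :
    IsFixedPt T z := by
  set w := z - T z
  have hle : ∀ k, ‖w‖ ^ 2 ≤ ‖v k - T (v k)‖ * (‖v k - T (v k)‖ + 2 * C) - 2 * ⟪v k - z, w⟫ := by
    intro k
    have htri : ‖v k - T z‖ ≤ ‖v k - T (v k)‖ + ‖v k - z‖ :=
      (norm_sub_le_norm_sub_add_norm_sub _ _ _).trans (by gcongr; exact hT _ _)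
    have hexp : ‖v k - T z‖ ^ 2 = ‖v k - z‖ ^ 2 + 2 * ⟪v k - z, w⟫ + ‖w‖ ^ 2 := by
      rw [← norm_add_sq_real, sub_add_sub_cancel]
    nlinarith [norm_nonneg (v k - T z), norm_nonneg (v k - T (v k)), norm_nonneg (v k - z),
      hC k, pow_le_pow_left₀ (norm_nonneg _) htri 2]
  have hlim : Tendsto (fun k => ‖v k - T (v k)‖ * (‖v k - T (v k)‖ + 2 * C)
      - 2 * ⟪v k - z, w⟫) atTop (𝓝 0) := by
    have hinner : Tendsto (fun k => ⟪v k - z, w⟫) atTop (𝓝 0) := by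
      simpa only [inner_sub_left, sub_self] using (hweak w).sub_const ⟪z, w⟫
    simpa using (hasym.mul (hasym.add_const (2 * C))).sub (hinner.const_mul 2)
  have hw : ‖w‖ ^ 2 ≤ 0 := ge_of_tendsto' hlim hle
  exact (sub_eq_zero.1 (norm_eq_zero.1 (pow_eq_zero_iff two_ne_zero |>.1
    (le_antisymm hw (sq_nonneg _))))).symm

theorem eventually_inner_sub_le_of_tendsto_norm_sub_apply [CompleteSpace H]
    (hT : ∀ x y, ‖T x - T y‖ ≤ ‖x - y‖) {x : ℕ → H} {C : ℝ} (hx : ∀ n, ‖x n‖ ≤ C)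
    (hasym : Tendsto (fun n => ‖x n - T (x n)‖) atTop (𝓝 0)) {p y : H}
    (hy : ∀ z, IsFixedPt T z → ⟪z - p, y⟫ ≤ 0) {δ : ℝ} (hδ : 0 < δ) :
    ∀ᶠ n in atTop, ⟪x n - p, y⟫ ≤ δ := by
  by_contra hcon
  obtain ⟨ψ, hψ, hδψ⟩ := extraction_of_frequently_atTop
    ((not_eventually.1 hcon).mono fun n hn => lt_of_not_ge hn)
  obtain ⟨z, φ, hφ, hweak⟩ := exists_strictMono_forall_tendsto_inner_of_norm_le fun k => hx (ψ k)
  have hz : IsFixedPt T z := by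
    refine isFixedPt_of_tendsto_inner_of_tendsto_norm_sub_apply hT
      (C := C + ‖z‖) (fun k => (norm_sub_le _ _).trans (by gcongr; exact hx _)) hweak
      (hasym.comp (hψ.comp hφ).tendsto_atTop)
  have hlim : Tendsto (fun k => ⟪x (ψ (φ k)) - p, y⟫) atTop (𝓝 ⟪z - p, y⟫) := by
    simpa only [inner_sub_left] using (hweak y).sub_const ⟪p, y⟫
  linarith [hy z hz, ge_of_tendsto' hlim fun k => (hδψ (φ k)).le]

structure IsHybridSteepestDescent (T F : H → H) (μ c : ℝ) (lam : ℕ → ℝ) (u : ℕ → H) :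
    Prop where
  nonexpansive : ∀ x y, ‖T x - T y‖ ≤ ‖x - y‖
  contraction : ∀ l ∈ Set.Icc (0 : ℝ) 1, ∀ x ∈ Set.range T, ∀ y ∈ Set.range T,
    ‖(x - (l * μ) • F x) - (y - (l * μ) • F y)‖ ≤ (1 - l * c) * ‖x - y‖
  step_pos : 0 < μ
  rate_pos : 0 < c
  rate_le_one : c ≤ 1
  lam_mem : ∀ n, lam n ∈ Set.Ioc (0 : ℝ) 1
  succ : ∀ n, u (n + 1) = T (u n) - (lam (n + 1) * μ) • F (T (u n))

namespace IsHybridSteepestDescent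

variable {T F : H → H} {μ c : ℝ} {lam : ℕ → ℝ} {u : ℕ → H}

theorem one_sub_mul_rate_nonneg (h : IsHybridSteepestDescent T F μ c lam u) (n : ℕ) :
    0 ≤ 1 - lam n * c := by
  nlinarith [(h.lam_mem n).1, (h.lam_mem n).2, h.rate_pos, h.rate_le_one]

theorem lam_mul_rate_mem (h : IsHybridSteepestDescent T F μ c lam u) (n : ℕ) :
    lam n * c ∈ Set.Icc (0 : ℝ) 1 :=
  ⟨mul_nonneg (h.lam_mem n).1.le h.rate_pos.le, by linarith [h.one_sub_mul_rate_nonneg n]⟩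

theorem contraction_lam (h : IsHybridSteepestDescent T F μ c lam u) (n : ℕ) (x y : H) :
    ‖(T x - (lam n * μ) • F (T x)) - (T y - (lam n * μ) • F (T y))‖
      ≤ (1 - lam n * c) * ‖x - y‖ :=
  (h.contraction _ ⟨(h.lam_mem n).1.le, (h.lam_mem n).2⟩ _ ⟨x, rfl⟩ _ ⟨y, rfl⟩).trans
    (mul_le_mul_of_nonneg_left (h.nonexpansive x y) (h.one_sub_mul_rate_nonneg n))

theorem norm_succ_sub_add_smul_le (h : IsHybridSteepestDescent T F μ c lam u) {p : H}
    (hp : IsFixedPt T p) (n : ℕ) :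
    ‖u (n + 1) - p + (lam (n + 1) * μ) • F p‖ ≤ (1 - lam (n + 1) * c) * ‖u n - p‖ := by
  have := h.contraction_lam (n + 1) (u n) p
  rwa [hp.eq, ← h.succ, sub_sub_eq_add_sub, add_sub_right_comm] at this

theorem norm_sub_le_max (h : IsHybridSteepestDescent T F μ c lam u) {p : H}
    (hp : IsFixedPt T p) (n : ℕ) : ‖u n - p‖ ≤ max ‖u 0 - p‖ (μ * ‖F p‖ / c) := by
  induction n with
  | zero => exact le_max_left _ _
  | succ n ih =>
    set M := max ‖u 0 - p‖ (μ * ‖F p‖ / c)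
    have hFp : μ * ‖F p‖ ≤ c * M := (div_le_iff₀' h.rate_pos).1 (le_max_right _ _)
    have hl := (h.lam_mem (n + 1)).1
    have hsmul : ‖(lam (n + 1) * μ) • F p‖ = lam (n + 1) * (μ * ‖F p‖) := by
      rw [norm_smul, Real.norm_of_nonneg (by nlinarith [h.step_pos]), mul_assoc]
    calc ‖u (n + 1) - p‖
        ≤ ‖u (n + 1) - p + (lam (n + 1) * μ) • F p‖ + ‖(lam (n + 1) * μ) • F p‖ := by
          simpa using norm_sub_le (u (n + 1) - p + (lam (n + 1) * μ) • F p)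
            ((lam (n + 1) * μ) • F p)
      _ ≤ (1 - lam (n + 1) * c) * M + lam (n + 1) * (c * M) := by
          rw [hsmul]
          exact add_le_add ((h.norm_succ_sub_add_smul_le hp n).trans
            (mul_le_mul_of_nonneg_left ih (h.one_sub_mul_rate_nonneg _)))
            (mul_le_mul_of_nonneg_left hFp hl.le)
      _ = M := by ring

theorem exists_forall_norm_le (h : IsHybridSteepestDescent T F μ c lam u) {κ : ℝ}
    (hFlip : ∀ x ∈ Set.range T, ∀ y ∈ Set.range T, ‖F x - F y‖ ≤ κ * ‖x - y‖) {p : H}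
    (hp : IsFixedPt T p) : ∃ B, ∀ n, ‖u n‖ ≤ B ∧ ‖F (T (u n))‖ ≤ B := by
  set M := max ‖u 0 - p‖ (μ * ‖F p‖ / c)
  have hM : 0 ≤ M := (norm_nonneg _).trans (le_max_left _ _)
  have hκM : 0 ≤ |κ| * M := mul_nonneg (abs_nonneg κ) hM
  refine ⟨M + ‖p‖ + |κ| * M + ‖F p‖, fun n => ⟨?_, ?_⟩⟩
  · linarith [norm_le_norm_sub_add (u n) p, h.norm_sub_le_max hp n, norm_nonneg (F p)]
  · have hFT : ‖F (T (u n)) - F p‖ ≤ |κ| * M := by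
      calc ‖F (T (u n)) - F p‖ ≤ κ * ‖T (u n) - p‖ := hFlip _ ⟨u n, rfl⟩ _ ⟨p, hp⟩
        _ = κ * ‖T (u n) - T p‖ := by rw [hp.eq]
        _ ≤ |κ| * ‖u n - p‖ :=
          mul_le_mul (le_abs_self κ) (h.nonexpansive _ _) (norm_nonneg _) (abs_nonneg κ)
        _ ≤ |κ| * M := mul_le_mul_of_nonneg_left (h.norm_sub_le_max hp n) (abs_nonneg κ)
    linarith [norm_le_norm_sub_add (F (T (u n))) (F p), norm_nonneg p]

theorem norm_succ_succ_sub_le (h : IsHybridSteepestDescent T F μ c lam u) {B : ℝ}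
    (hB : ∀ n, ‖F (T (u n))‖ ≤ B) (n : ℕ) :
    ‖u (n + 2) - u (n + 1)‖
      ≤ (1 - lam (n + 2) * c) * ‖u (n + 1) - u n‖ + |lam (n + 1) - lam (n + 2)| * (μ * B) := by
  have e : u (n + 2) - u (n + 1)
      = ((T (u (n + 1)) - (lam (n + 2) * μ) • F (T (u (n + 1))))
          - (T (u n) - (lam (n + 2) * μ) • F (T (u n))))
        + ((lam (n + 1) - lam (n + 2)) * μ) • F (T (u n)) := by
    rw [h.succ (n + 1), h.succ n]
    module
  rw [e]
  refine (norm_add_le _ _).trans (add_le_add (h.contraction_lam _ _ _) ?_)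
  rw [norm_smul, Real.norm_eq_abs, abs_mul, abs_of_pos h.step_pos, mul_assoc]
  exact mul_le_mul_of_nonneg_left (mul_le_mul_of_nonneg_left (hB n) h.step_pos.le) (abs_nonneg _)

theorem tendsto_norm_succ_sub (h : IsHybridSteepestDescent T F μ c lam u) {B : ℝ}
    (hB : ∀ n, ‖F (T (u n))‖ ≤ B) (hlam0 : Tendsto lam atTop (𝓝 0)) (hdiv : ¬ Summable lam)
    (hratio : Tendsto (fun n => (lam n - lam (n + 1)) / lam n ^ 2) atTop (𝓝 0)) :
    Tendsto (fun n => ‖u (n + 1) - u n‖) atTop (𝓝 0) := by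
  have hβ : Tendsto (fun n => |lam (n + 1) - lam (n + 2)| / lam (n + 2) * (μ * B / c)) atTop
      (𝓝 0) := by
    have := ((tendsto_sub_div_succ_of_tendsto_sub_div_sq (fun n => (h.lam_mem n).1) hlam0
      hratio).comp (tendsto_add_atTop_nat 1)).abs.mul_const (μ * B / c)
    simpa [abs_div, abs_of_pos (h.lam_mem _).1] using this
  refine tendsto_zero_of_le_one_sub_mul_add_mul (α := fun n => lam (n + 2) * c)
    (fun n => norm_nonneg _) (fun n => h.lam_mul_rate_mem (n + 2)) ?_ (fun n => ?_)
    (fun ε hε => ((tendsto_order.1 hβ).2 ε hε).mono fun n => le_of_lt)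
  · rwa [summable_mul_right_iff h.rate_pos.ne', summable_nat_add_iff 2]
  · convert h.norm_succ_succ_sub_le hB n using 2
    field_simp [(h.lam_mem (n + 2)).1.ne', h.rate_pos.ne']

theorem tendsto_norm_sub_apply (h : IsHybridSteepestDescent T F μ c lam u) {B : ℝ}
    (hB : ∀ n, ‖F (T (u n))‖ ≤ B) (hlam0 : Tendsto lam atTop (𝓝 0)) (hdiv : ¬ Summable lam)
    (hratio : Tendsto (fun n => (lam n - lam (n + 1)) / lam n ^ 2) atTop (𝓝 0)) :
    Tendsto (fun n => ‖u n - T (u n)‖) atTop (𝓝 0) := by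
  have hlim := (h.tendsto_norm_succ_sub hB hlam0 hdiv hratio).add
    ((hlam0.comp (tendsto_add_atTop_nat 1)).mul_const (μ * B))
  rw [zero_mul, add_zero] at hlim
  refine squeeze_zero (fun n => norm_nonneg _) (fun n => ?_) hlim
  calc ‖u n - T (u n)‖ ≤ ‖u (n + 1) - u n‖ + ‖u (n + 1) - T (u n)‖ := by
        simpa [norm_sub_rev] using norm_sub_le_norm_sub_add_norm_sub (u n) (u (n + 1)) (T (u n))
    _ ≤ ‖u (n + 1) - u n‖ + lam (n + 1) * (μ * B) := by
        rw [h.succ, sub_sub_cancel_left, norm_neg, norm_smul,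
          Real.norm_of_nonneg (by nlinarith [(h.lam_mem (n + 1)).1, h.step_pos]), mul_assoc]
        exact add_le_add le_rfl (mul_le_mul_of_nonneg_left
          (mul_le_mul_of_nonneg_left (hB n) h.step_pos.le) (h.lam_mem _).1.le)

theorem norm_succ_sub_sq_le (h : IsHybridSteepestDescent T F μ c lam u) {p : H}
    (hp : IsFixedPt T p) (n : ℕ) :
    ‖u (n + 1) - p‖ ^ 2 ≤ (1 - lam (n + 1) * c) * ‖u n - p‖ ^ 2
      + lam (n + 1) * c * (2 * μ / c * ⟪u (n + 1) - p, -F p⟫) := by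
  -- `‖x‖² ≤ ‖x + s‖² - 2⟪x, s⟫` with `x = u (n + 1) - p` and `s = (λₙ₊₁ μ) • F p`
  have hexp := norm_add_sq_real (u (n + 1) - p) ((lam (n + 1) * μ) • F p)
  rw [real_inner_smul_right] at hexp
  have hq := h.one_sub_mul_rate_nonneg (n + 1)
  have hstep : ‖u (n + 1) - p + (lam (n + 1) * μ) • F p‖ ^ 2
      ≤ (1 - lam (n + 1) * c) * ‖u n - p‖ ^ 2 :=
    calc _ ≤ ((1 - lam (n + 1) * c) * ‖u n - p‖) ^ 2 :=
          pow_le_pow_left₀ (norm_nonneg _) (h.norm_succ_sub_add_smul_le hp n) 2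
      _ ≤ (1 - lam (n + 1) * c) * ‖u n - p‖ ^ 2 := by
          rw [mul_pow]
          exact mul_le_mul_of_nonneg_right
            (by nlinarith [mul_nonneg hq (h.lam_mul_rate_mem (n + 1)).1]) (sq_nonneg _)
  have hinner : lam (n + 1) * c * (2 * μ / c * ⟪u (n + 1) - p, -F p⟫)
      = -(2 * (lam (n + 1) * μ * ⟪u (n + 1) - p, F p⟫)) := by
    rw [inner_neg_right]
    field_simp [h.rate_pos.ne']
  rw [hinner]
  nlinarith [sq_nonneg ‖(lam (n + 1) * μ) • F p‖]

theorem tendsto_of_forall_inner_nonneg [CompleteSpace H]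
    (h : IsHybridSteepestDescent T F μ c lam u) {B : ℝ} (hB : ∀ n, ‖u n‖ ≤ B ∧ ‖F (T (u n))‖ ≤ B)
    (hlam0 : Tendsto lam atTop (𝓝 0)) (hdiv : ¬ Summable lam)
    (hratio : Tendsto (fun n => (lam n - lam (n + 1)) / lam n ^ 2) atTop (𝓝 0)) {p : H}
    (hp : IsFixedPt T p) (hvip : ∀ v, IsFixedPt T v → 0 ≤ ⟪v - p, F p⟫) :
    Tendsto u atTop (𝓝 p) := by
  have hμ := h.step_pos
  have hc := h.rate_pos
  have hlimsup : ∀ δ > 0, ∀ᶠ n in atTop, ⟪u (n + 1) - p, -F p⟫ ≤ δ := fun δ hδ =>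
    (tendsto_add_atTop_nat 1).eventually <| eventually_inner_sub_le_of_tendsto_norm_sub_apply
      h.nonexpansive (fun n => (hB n).1)
      (h.tendsto_norm_sub_apply (fun n => (hB n).2) hlam0 hdiv hratio)
      (fun z hz => by rw [inner_neg_right]; linarith [hvip z hz]) hδ
  have hsq : Tendsto (fun n => ‖u n - p‖ ^ 2) atTop (𝓝 0) := by
    refine tendsto_zero_of_le_one_sub_mul_add_mul (α := fun n => lam (n + 1) * c)
      (β := fun n => 2 * μ / c * ⟪u (n + 1) - p, -F p⟫) (fun n => sq_nonneg _)
      (fun n => h.lam_mul_rate_mem (n + 1)) ?_ (h.norm_succ_sub_sq_le hp) fun ε hε => ?_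
    · rwa [summable_mul_right_iff hc.ne', summable_nat_add_iff 1]
    · filter_upwards [hlimsup (ε * c / (2 * μ)) (by positivity)] with n hn
      calc 2 * μ / c * ⟪u (n + 1) - p, -F p⟫ ≤ 2 * μ / c * (ε * c / (2 * μ)) := by gcongr
        _ = ε := by field_simp
  rw [tendsto_iff_norm_sub_tendsto_zero]
  simpa [Real.sqrt_sq (norm_nonneg _)] using hsq.sqrt

end IsHybridSteepestDescent

end InnerProductSpace

theorem hsdm_single_convergence_general
    {H : Type*} [NormedAddCommGroup H] [InnerProductSpace ℝ H] [CompleteSpace H]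
    (T : H → H) (hT : ∀ x y : H, ‖T x - T y‖ ≤ ‖x - y‖)
    (hfix : ∃ p : H, T p = p)
    (κ η : ℝ) (hκ : 0 < κ) (hη : 0 < η)
    (F : H → H)
    (hFlip : ∀ x ∈ Set.range T, ∀ y ∈ Set.range T, ‖F x - F y‖ ≤ κ * ‖x - y‖)
    (hFmon : ∀ x ∈ Set.range T, ∀ y ∈ Set.range T, η * ‖x - y‖ ^ 2 ≤ ⟪F x - F y, x - y⟫)
    (μ : ℝ) (hμ : μ ∈ Set.Ioo (0 : ℝ) (2 * η / κ ^ 2))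
    (lam : ℕ → ℝ) (hlam : ∀ n, lam n ∈ Set.Ioc (0 : ℝ) 1)
    (hlam0 : Filter.Tendsto lam Filter.atTop (nhds 0))
    (hdiv : Filter.Tendsto (fun n => ∑ i ∈ Finset.Icc 1 n, lam i) Filter.atTop Filter.atTop)
    (hratio : Filter.Tendsto (fun n => (lam n - lam (n + 1)) / (lam n) ^ 2)
      Filter.atTop (nhds 0))
    (u : ℕ → H)
    (hrec : ∀ n, u (n + 1) = T (u n) - (lam (n + 1) * μ) • F (T (u n))) :
    ∃ ustar : H,
      (T ustar = ustar ∧ ∀ v, T v = v → 0 ≤ ⟪v - ustar, F ustar⟫) ∧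
      (∀ w, T w = w → (∀ v, T v = v → 0 ≤ ⟪v - w, F w⟫) → w = ustar) ∧
      Filter.Tendsto u Filter.atTop (nhds ustar) := by
  obtain ⟨c, hc0, hc1, hcontr⟩ := exists_pos_forall_norm_sub_smul_sub_sub_smul_le hFlip hFmon hμ.1
    ((lt_div_iff₀ (by positivity)).1 hμ.2)
  have hseq : IsHybridSteepestDescent T F μ c lam u := ⟨hT, hcontr, hμ.1, hc0, hc1, hlam, hrec⟩
  have hrange : fixedPoints T ⊆ Set.range T := fun x hx => ⟨x, hx⟩
  obtain ⟨ustar, hustar, hvip⟩ := exists_mem_forall_inner_nonneg_of_contraction hfix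
    (isClosed_fixedPoints_of_nonexpansive hT) (convex_fixedPoints_of_nonexpansive hT) hμ.1
    (q := (1 - c).toNNReal) (Real.toNNReal_lt_one.2 (by linarith)) fun x hx y hy => by
      simpa [Real.coe_toNNReal _ (sub_nonneg.2 hc1)] using
        hcontr 1 ⟨zero_le_one, le_rfl⟩ x (hrange hx) y (hrange hy)
  obtain ⟨B, hB⟩ := hseq.exists_forall_norm_le hFlip hustar
  refine ⟨ustar, ⟨hustar, hvip⟩, fun w hw hwvip => ?_, ?_⟩
  · exact eq_of_forall_inner_nonneg_of_strongly_monotone hη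
      (fun x hx y hy => hFmon x (hrange hx) y (hrange hy)) hw hustar hwvip hvip
  · exact hseq.tendsto_of_forall_inner_nonneg hB hlam0
      (not_summable_of_tendsto_sum_atTop (fun n => (hlam n).1.le) hdiv) hratio hustar hvip

/-- Yamada's theorem (single nonexpansive mapping): the hybrid steepest descent method
converges strongly to the unique solution of VIP(F, Fix T). -/
theorem hsdm_single_convergence
    {H : Type*} [NormedAddCommGroup H] [InnerProductSpace ℝ H] [CompleteSpace H]
    (T : H → H) (hT : ∀ x y : H, ‖T x - T y‖ ≤ ‖x - y‖)
    (hfix : ∃ p : H, T p = p)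
    (κ η : ℝ) (hκ : 0 < κ) (hη : 0 < η)
    (F : H → H)
    (hFlip : ∀ x ∈ Set.range T, ∀ y ∈ Set.range T, ‖F x - F y‖ ≤ κ * ‖x - y‖)
    (hFmon : ∀ x ∈ Set.range T, ∀ y ∈ Set.range T, η * ‖x - y‖ ^ 2 ≤ ⟪F x - F y, x - y⟫)
    (μ : ℝ) (hμ : μ ∈ Set.Ioo (0 : ℝ) (2 * η / κ ^ 2))
    (lam : ℕ → ℝ) (hlam : ∀ n, lam n ∈ Set.Ioc (0 : ℝ) 1)
    (hlam0 : Filter.Tendsto lam Filter.atTop (nhds 0))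
    (hdiv : Filter.Tendsto (fun n => ∑ i ∈ Finset.Icc 1 n, lam i) Filter.atTop Filter.atTop)
    (hratio : Filter.Tendsto (fun n => (lam n - lam (n + 1)) / (lam n) ^ 2)
      Filter.atTop (nhds 0))
    (u₀ : H) (u : ℕ → H) (hu0 : u 0 = u₀)
    (hrec : ∀ n, u (n + 1) = T (u n) - (lam (n + 1) * μ) • F (T (u n))) :
    ∃ ustar : H,
      (T ustar = ustar ∧ ∀ v, T v = v → 0 ≤ ⟪v - ustar, F ustar⟫) ∧
      (∀ w, T w = w → (∀ v, T v = v → 0 ≤ ⟪v - w, F w⟫) → w = ustar) ∧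
      Filter.Tendsto u Filter.atTop (nhds ustar) :=
  hsdm_single_convergence_general T hT hfix κ η hκ hη F hFlip hFmon μ hμ lam hlam hlam0 hdiv hratio
    u hrec
end

section
/- Let H be a real Hilbert space, 0 ≤ τ < 1, G : H → H a map with ‖G(x) − G(y)‖ ≤ τ‖x − y‖ for all x, y ∈ H, and let a, b, c ∈ H and ε̃ > 0. If ⟨a − G(b), a − b⟩ < ε̃²/2 and ⟨b − G(c), b − a⟩ < ε̃²/2, then ‖a − b‖ < τ‖b − c‖ + ε̃. -/
open scoped RealInnerProductSpace

/-- Quantitative nonexpansiveness of the metric projection, as used in the iterative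
construction of approximate solutions to the variational inequality problem. -/
theorem quantitative_projection_nonexpansive
    {H : Type*} [NormedAddCommGroup H] [InnerProductSpace ℝ H] [CompleteSpace H]
    (τ : ℝ) (hτ0 : 0 ≤ τ) (hτ1 : τ < 1)
    (G : H → H) (hG : ∀ x y : H, ‖G x - G y‖ ≤ τ * ‖x - y‖)
    (a b c : H) (εt : ℝ) (hεt : 0 < εt)
    (h1 : ⟪a - G b, a - b⟫ < εt ^ 2 / 2)
    (h2 : ⟪b - G c, b - a⟫ < εt ^ 2 / 2) :
    ‖a - b‖ < τ * ‖b - c‖ + εt := by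
  have key : ⟪a - G b, a - b⟫ + ⟪b - G c, b - a⟫
      = ‖a - b‖ ^ 2 - ⟪G b - G c, a - b⟫ := by
    rw [← real_inner_self_eq_norm_sq]
    simp only [inner_sub_left, inner_sub_right, inner_sub_sub_self]
    ring_nf
  have hcs : ⟪G b - G c, a - b⟫ ≤ τ * ‖b - c‖ * ‖a - b‖ := by
    calc ⟪G b - G c, a - b⟫ ≤ ‖G b - G c‖ * ‖a - b‖ := real_inner_le_norm _ _
      _ ≤ τ * ‖b - c‖ * ‖a - b‖ := by
          have := hG b c
          have := norm_nonneg (a - b)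
          nlinarith
  have hab : (0:ℝ) ≤ ‖a - b‖ := norm_nonneg _
  have hbc : (0:ℝ) ≤ τ * ‖b - c‖ := mul_nonneg hτ0 (norm_nonneg _)
  nlinarith [sq_nonneg (‖a - b‖ - τ * ‖b - c‖ - εt)]
end

section
/- Let H be a real Hilbert space, C ⊆ H nonempty convex, T : C → C nonexpansive, G : C → C a τ-contraction (0 ≤ τ < 1), d ≥ 1 an integer, λ ∈ (0,1], h ∈ ℕ⁺ with λ ≥ 1/h, ε > 0, and let u*, v, v̄ ∈ C satisfy ‖v̄ − u*‖ ≤ d and v̄ = (1−λ)·T(v̄) + λ·G(T(v̄)). If (i) ‖T(u*) − u*‖ ≤ (1−τ)ε²/(9d·h), (ii) ⟨G(u*) − u*, v̄ − v⟩ ≤ (1−τ)ε²/3, and (iii) ⟨G(u*) − u*, v − u*⟩ ≤ (1−τ)ε²/3, then ‖v̄ − u*‖ ≤ ε. -/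
open scoped RealInnerProductSpace

set_option maxHeartbeats 1000000 in
/-- Quantitative lemma for the resolvent point `v̄ = (1−λ)T(v̄) + λG(T(v̄))`: smallness
of the fixed-point defect of `u*` and of two inner-product terms forces `v̄` to be
ε-close to `u*`. -/
theorem resolvent_quantitative_lemma
    {H : Type*} [NormedAddCommGroup H] [InnerProductSpace ℝ H] [CompleteSpace H]
    (C : Set H) (hne : C.Nonempty) (hcv : Convex ℝ C)
    (T : H → H) (hTm : Set.MapsTo T C C)
    (hT : ∀ x ∈ C, ∀ y ∈ C, ‖T x - T y‖ ≤ ‖x - y‖)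
    (τ : ℝ) (hτ0 : 0 ≤ τ) (hτ1 : τ < 1)
    (G : H → H) (hGm : Set.MapsTo G C C)
    (hG : ∀ x ∈ C, ∀ y ∈ C, ‖G x - G y‖ ≤ τ * ‖x - y‖)
    (d : ℕ) (hd : 1 ≤ d)
    (lam : ℝ) (hlam : lam ∈ Set.Ioc (0 : ℝ) 1)
    (h : ℕ) (hh : 1 ≤ h) (hlamh : 1 / (h : ℝ) ≤ lam)
    (ε : ℝ) (hε : 0 < ε)
    (ustar v vbar : H) (hustar : ustar ∈ C) (hv : v ∈ C) (hvbar : vbar ∈ C)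
    (hdist : ‖vbar - ustar‖ ≤ (d : ℝ))
    (hres : vbar = (1 - lam) • T vbar + lam • G (T vbar))
    (h1 : ‖T ustar - ustar‖ ≤ (1 - τ) * ε ^ 2 / (9 * (d : ℝ) * (h : ℝ)))
    (h2 : ⟪G ustar - ustar, vbar - v⟫ ≤ (1 - τ) * ε ^ 2 / 3)
    (h3 : ⟪G ustar - ustar, v - ustar⟫ ≤ (1 - τ) * ε ^ 2 / 3) :
    ‖vbar - ustar‖ ≤ ε := by
  obtain ⟨hlam0, hlam1⟩ := hlam
  have hτ' : (0:ℝ) < 1 - τ := by linarith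
  have hh0 : (0:ℝ) < h := by exact_mod_cast hh
  have hd0 : (0:ℝ) < d := by exact_mod_cast hd
  set s := ‖vbar - ustar‖ with hsdef
  have hs0 : 0 ≤ s := norm_nonneg _
  set δ := ‖T ustar - ustar‖ with hδdef
  have hδ0 : 0 ≤ δ := norm_nonneg _
  -- T vbar is close to ustar
  have hnormTw : ‖T vbar - ustar‖ ≤ s + δ := by
    calc ‖T vbar - ustar‖ = ‖(T vbar - T ustar) + (T ustar - ustar)‖ := by
            rw [sub_add_sub_cancel]
      _ ≤ ‖T vbar - T ustar‖ + ‖T ustar - ustar‖ := norm_add_le _ _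
      _ ≤ s + δ := by
            have := hT vbar hvbar ustar hustar
            linarith
  -- decomposition of vbar - ustar
  have hdec : vbar - ustar = (1 - lam) • (T vbar - ustar) + lam • (G (T vbar) - ustar) := by
    nth_rewrite 1 [hres]
    module
  have key : s ^ 2 = (1 - lam) * ⟪T vbar - ustar, vbar - ustar⟫
      + lam * ⟪G (T vbar) - ustar, vbar - ustar⟫ := by
    rw [hsdef, ← real_inner_self_eq_norm_sq]
    nth_rewrite 1 [hdec]
    rw [inner_add_left, real_inner_smul_left, real_inner_smul_left]
  -- bound for the first inner product
  have hA : ⟪T vbar - ustar, vbar - ustar⟫ ≤ (s + δ) * s := by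
    calc ⟪T vbar - ustar, vbar - ustar⟫ ≤ ‖T vbar - ustar‖ * ‖vbar - ustar‖ :=
          real_inner_le_norm _ _
      _ ≤ (s + δ) * s := by
          apply mul_le_mul_of_nonneg_right hnormTw hs0
  -- bound for the second inner product
  have hGc : ⟪G (T vbar) - G ustar, vbar - ustar⟫ ≤ τ * ((s + δ) * s) := by
    calc ⟪G (T vbar) - G ustar, vbar - ustar⟫ ≤ ‖G (T vbar) - G ustar‖ * ‖vbar - ustar‖ :=
          real_inner_le_norm _ _
      _ ≤ (τ * ‖T vbar - ustar‖) * s :=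
          mul_le_mul_of_nonneg_right (hG (T vbar) (hTm hvbar) ustar hustar) hs0
      _ ≤ τ * ((s + δ) * s) := by
          rw [mul_assoc]
          exact mul_le_mul_of_nonneg_left
            (mul_le_mul_of_nonneg_right hnormTw hs0) hτ0
  have hGu : ⟪G ustar - ustar, vbar - ustar⟫ ≤ 2 * (1 - τ) * ε ^ 2 / 3 := by
    have hsplit : ⟪G ustar - ustar, vbar - ustar⟫
        = ⟪G ustar - ustar, vbar - v⟫ + ⟪G ustar - ustar, v - ustar⟫ := by
      rw [← inner_add_right, sub_add_sub_cancel]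
    rw [hsplit]; linarith
  have hB : ⟪G (T vbar) - ustar, vbar - ustar⟫
      ≤ τ * ((s + δ) * s) + 2 * (1 - τ) * ε ^ 2 / 3 := by
    have hsplit : ⟪G (T vbar) - ustar, vbar - ustar⟫
        = ⟪G (T vbar) - G ustar, vbar - ustar⟫ + ⟪G ustar - ustar, vbar - ustar⟫ := by
      rw [← inner_add_left, sub_add_sub_cancel]
    rw [hsplit]; linarith
  -- small product term
  have hδs : δ * s ≤ lam * (1 - τ) * ε ^ 2 / 3 := by
    have h1' : δ * s ≤ (1 - τ) * ε ^ 2 / (9 * (d : ℝ) * (h : ℝ)) * (d : ℝ) :=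
      mul_le_mul h1 hdist hs0 (by positivity)
    have heq : (1 - τ) * ε ^ 2 / (9 * (d : ℝ) * (h : ℝ)) * (d : ℝ)
        = (1 - τ) * ε ^ 2 / (9 * (h : ℝ)) := by
      field_simp
    have hhl : 1 ≤ lam * (h : ℝ) := (div_le_iff₀ hh0).mp hlamh
    have h2' : (1 - τ) * ε ^ 2 / (9 * (h : ℝ)) ≤ lam * (1 - τ) * ε ^ 2 / 3 := by
      rw [div_le_div_iff₀ (by positivity) (by norm_num)]
      nlinarith [mul_nonneg hτ'.le (sq_nonneg ε)]
    linarith [h1'.trans_eq heq]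
  -- main estimate
  have e1 : (1 - lam) * ⟪T vbar - ustar, vbar - ustar⟫ ≤ (1 - lam) * ((s + δ) * s) :=
    mul_le_mul_of_nonneg_left hA (by linarith)
  have e2 : lam * ⟪G (T vbar) - ustar, vbar - ustar⟫
      ≤ lam * (τ * ((s + δ) * s) + 2 * (1 - τ) * ε ^ 2 / 3) :=
    mul_le_mul_of_nonneg_left hB hlam0.le
  have e3 : s ^ 2 ≤ s ^ 2 + δ * s - lam * s ^ 2 + lam * τ * s ^ 2 - lam * (δ * s)
      + lam * τ * (δ * s) + 2 * (lam * (1 - τ)) * ε ^ 2 / 3 := by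
    have hrw : (1 - lam) * ((s + δ) * s) + lam * (τ * ((s + δ) * s) + 2 * (1 - τ) * ε ^ 2 / 3)
        = s ^ 2 + δ * s - lam * s ^ 2 + lam * τ * s ^ 2 - lam * (δ * s)
          + lam * τ * (δ * s) + 2 * (lam * (1 - τ)) * ε ^ 2 / 3 := by ring
    linarith [key, e1, e2, hrw.le, hrw.ge]
  have hnn : 0 ≤ lam * (δ * s) - lam * τ * (δ * s) := by
    have : 0 ≤ lam * (1 - τ) * (δ * s) :=
      mul_nonneg (mul_nonneg hlam0.le hτ'.le) (mul_nonneg hδ0 hs0)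
    nlinarith [this]
  have hmain : lam * (1 - τ) * s ^ 2 ≤ δ * s + 2 * (lam * (1 - τ)) * ε ^ 2 / 3 := by
    have hexp : lam * (1 - τ) * s ^ 2 = lam * s ^ 2 - lam * τ * s ^ 2 := by ring
    linarith [e3, hnn, hexp.le, hexp.ge]
  have hsq : s ^ 2 ≤ ε ^ 2 := by
    have hP : (0:ℝ) < lam * (1 - τ) := mul_pos hlam0 hτ'
    have hfin : lam * (1 - τ) * s ^ 2 ≤ lam * (1 - τ) * ε ^ 2 := by linarith [hmain, hδs]
    exact le_of_mul_le_mul_left (by linarith [hfin]) hP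
  nlinarith [hsq, hs0, hε]
end

section
/- Let H be a real Hilbert space, C ⊆ H nonempty convex, T : C → C nonexpansive, G : C → C a τ-contraction (0 ≤ τ < 1), d ≥ 1 an integer, λ ∈ (0,1], h ∈ ℕ⁺ with λ ≥ 1/h, ε > 0, and let u*, v̄ ∈ C satisfy ‖v̄ − u*‖ ≤ d and v̄ = (1−λ)·T(v̄) + λ·G(T(v̄)). If ‖T(u*) − u*‖ ≤ (1−τ)ε²/(6d·h) and ⟨G(u*) − u*, v̄ − u*⟩ ≤ (1−τ)ε²/2, then ‖v̄ − u*‖ ≤ ε. -/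
set_option maxHeartbeats 1000000


open scoped RealInnerProductSpace

/-- Corollary of the quantitative resolvent lemma (the case `v = v̄`). -/
theorem resolvent_quantitative_corollary
    {H : Type*} [NormedAddCommGroup H] [InnerProductSpace ℝ H] [CompleteSpace H]
    (C : Set H) (hne : C.Nonempty) (hcv : Convex ℝ C)
    (T : H → H) (hTm : Set.MapsTo T C C)
    (hT : ∀ x ∈ C, ∀ y ∈ C, ‖T x - T y‖ ≤ ‖x - y‖)
    (τ : ℝ) (hτ0 : 0 ≤ τ) (hτ1 : τ < 1)
    (G : H → H) (hGm : Set.MapsTo G C C)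
    (hG : ∀ x ∈ C, ∀ y ∈ C, ‖G x - G y‖ ≤ τ * ‖x - y‖)
    (d : ℕ) (hd : 1 ≤ d)
    (lam : ℝ) (hlam : lam ∈ Set.Ioc (0 : ℝ) 1)
    (h : ℕ) (hh : 1 ≤ h) (hlamh : 1 / (h : ℝ) ≤ lam)
    (ε : ℝ) (hε : 0 < ε)
    (ustar vbar : H) (hustar : ustar ∈ C) (hvbar : vbar ∈ C)
    (hdist : ‖vbar - ustar‖ ≤ (d : ℝ))
    (hres : vbar = (1 - lam) • T vbar + lam • G (T vbar))
    (h1 : ‖T ustar - ustar‖ ≤ (1 - τ) * ε ^ 2 / (6 * (d : ℝ) * (h : ℝ)))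
    (h2 : ⟪G ustar - ustar, vbar - ustar⟫ ≤ (1 - τ) * ε ^ 2 / 2) :
    ‖vbar - ustar‖ ≤ ε := by
  obtain ⟨hlam0, hlam1⟩ := hlam
  have hwC : T vbar ∈ C := hTm hvbar
  have hd1 : (1 : ℝ) ≤ (d : ℝ) := by exact_mod_cast hd
  have hh1 : (1 : ℝ) ≤ (h : ℝ) := by exact_mod_cast hh
  have hh0 : (0 : ℝ) < (h : ℝ) := by linarith
  set r := ‖vbar - ustar‖ with hrdef
  set δ := ‖T ustar - ustar‖ with hδdef
  have hr0 : 0 ≤ r := norm_nonneg _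
  have hδ0 : 0 ≤ δ := norm_nonneg _
  -- nonexpansiveness and contraction bounds
  have hTw : ‖T vbar - T ustar‖ ≤ r := hT vbar hvbar ustar hustar
  have hwnorm : ‖T vbar - ustar‖ ≤ r + δ := by
    calc ‖T vbar - ustar‖ = ‖(T vbar - T ustar) + (T ustar - ustar)‖ := by
          congr 1; abel
      _ ≤ ‖T vbar - T ustar‖ + ‖T ustar - ustar‖ := norm_add_le _ _
      _ ≤ r + δ := by rw [← hδdef]; linarith
  have hGw : ‖G (T vbar) - G ustar‖ ≤ τ * (r + δ) := by
    calc ‖G (T vbar) - G ustar‖ ≤ τ * ‖T vbar - ustar‖ := hG _ hwC ustar hustar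
      _ ≤ τ * (r + δ) := by nlinarith
  -- inner product decomposition
  have hdecomp : vbar - ustar
      = (1 - lam) • (T vbar - ustar) + lam • (G (T vbar) - ustar) := by
    nth_rewrite 1 [hres]
    module
  have hsq : r ^ 2 = (1 - lam) * ⟪T vbar - ustar, vbar - ustar⟫
      + lam * ⟪G (T vbar) - ustar, vbar - ustar⟫ := by
    calc r ^ 2 = ⟪vbar - ustar, vbar - ustar⟫ := by
          rw [real_inner_self_eq_norm_sq]
      _ = ⟪(1 - lam) • (T vbar - ustar) + lam • (G (T vbar) - ustar), vbar - ustar⟫ := by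
          rw [← hdecomp]
      _ = _ := by rw [inner_add_left, real_inner_smul_left, real_inner_smul_left]
  -- bound the first inner product
  have hA : ⟪T vbar - ustar, vbar - ustar⟫ ≤ r ^ 2 + δ * r := by
    have hsplit : (T vbar - ustar) = (T vbar - T ustar) + (T ustar - ustar) := by abel
    rw [hsplit, inner_add_left]
    have e1 : ⟪T vbar - T ustar, vbar - ustar⟫ ≤ ‖T vbar - T ustar‖ * r :=
      real_inner_le_norm _ _
    have e2 : ⟪T ustar - ustar, vbar - ustar⟫ ≤ δ * r := real_inner_le_norm _ _
    nlinarith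
  -- bound the second inner product
  have hB : ⟪G (T vbar) - ustar, vbar - ustar⟫
      ≤ τ * (r + δ) * r + (1 - τ) * ε ^ 2 / 2 := by
    have hsplit : (G (T vbar) - ustar) = (G (T vbar) - G ustar) + (G ustar - ustar) := by
      abel
    rw [hsplit, inner_add_left]
    have e1 : ⟪G (T vbar) - G ustar, vbar - ustar⟫ ≤ ‖G (T vbar) - G ustar‖ * r :=
      real_inner_le_norm _ _
    have hτr : ‖G (T vbar) - G ustar‖ * r ≤ τ * (r + δ) * r :=
      mul_le_mul_of_nonneg_right hGw hr0
    linarith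
  clear_value r δ
  clear hrdef hδdef hdecomp hres
  -- combine
  have hsum : r ^ 2 ≤ (1 - lam) * (r ^ 2 + δ * r)
      + lam * (τ * (r + δ) * r + (1 - τ) * ε ^ 2 / 2) := by
    have c1 : 0 ≤ 1 - lam := by linarith
    have t1 := mul_le_mul_of_nonneg_left hA c1
    have t2 := mul_le_mul_of_nonneg_left hB hlam0.le
    linarith [hsq, t1, t2]
  -- bound δ * r
  have hδr : δ * r ≤ lam * (1 - τ) * ε ^ 2 / 6 := by
    have hdh : (0 : ℝ) < 6 * (d : ℝ) * (h : ℝ) := by positivity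
    have h1' : δ * (6 * (d : ℝ) * (h : ℝ)) ≤ (1 - τ) * ε ^ 2 := by
      rw [← le_div_iff₀ hdh]; exact h1
    have hlamh' : (1 : ℝ) ≤ lam * (h : ℝ) := by
      rw [div_le_iff₀ hh0] at hlamh; linarith
    have s1 : δ * r ≤ δ * (d : ℝ) := mul_le_mul_of_nonneg_left hdist hδ0
    have s2 : δ * (d : ℝ) ≤ δ * (d : ℝ) * (lam * (h : ℝ)) := by
      nlinarith [mul_nonneg hδ0 (by linarith : (0:ℝ) ≤ (d:ℝ))]
    have s3 : δ * (d : ℝ) * (lam * (h : ℝ)) = lam * (δ * ((d : ℝ) * (h : ℝ))) := by ring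
    have s4 : δ * ((d : ℝ) * (h : ℝ)) ≤ (1 - τ) * ε ^ 2 / 6 := by linarith
    have s5 : lam * (δ * ((d : ℝ) * (h : ℝ))) ≤ lam * ((1 - τ) * ε ^ 2 / 6) :=
      mul_le_mul_of_nonneg_left s4 hlam0.le
    have : lam * ((1 - τ) * ε ^ 2 / 6) = lam * (1 - τ) * ε ^ 2 / 6 := by ring
    linarith
  -- final nonlinear arithmetic
  have hr2 : r ^ 2 ≤ 2 * ε ^ 2 / 3 := by
    have key : lam * (1 - τ) * r ^ 2 ≤ δ * r + lam * (1 - τ) * ε ^ 2 / 2 := by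
      have hδrn : 0 ≤ δ * r := mul_nonneg hδ0 hr0
      nlinarith [mul_nonneg (mul_nonneg hlam0.le (by linarith : (0:ℝ) ≤ 1 - τ)) hδrn]
    have hpos : 0 < lam * (1 - τ) := by nlinarith
    nlinarith
  nlinarith [sq_nonneg (r - ε), sq_nonneg (r + ε)]
end

section
/- Let H be a real Hilbert space, d ≥ 1 an integer, C ⊆ H a nonempty set with ‖x − y‖ ≤ d for all x, y ∈ C, G : C → C a τ-contraction (0 ≤ τ < 1), ε > 0, and u, v, w ∈ C. If ‖u − v‖ ≤ ε/(2d(2+τ)) and ⟨G(u) − u, w − u⟩ ≤ ε/2, then ⟨G(v) − v, w − v⟩ ≤ ε. -/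
open scoped RealInnerProductSpace

/-- Modulus of continuity for the variational inequality `⟪G(u) − u, w − u⟫ ≤ ε` in the
variable `u`. -/
theorem vip_modulus_of_continuity
    {H : Type*} [NormedAddCommGroup H] [InnerProductSpace ℝ H] [CompleteSpace H]
    (d : ℕ) (hd : 1 ≤ d)
    (C : Set H) (hne : C.Nonempty)
    (hbd : ∀ x ∈ C, ∀ y ∈ C, ‖x - y‖ ≤ (d : ℝ))
    (τ : ℝ) (hτ0 : 0 ≤ τ) (hτ1 : τ < 1)
    (G : H → H) (hGm : Set.MapsTo G C C)
    (hG : ∀ x ∈ C, ∀ y ∈ C, ‖G x - G y‖ ≤ τ * ‖x - y‖)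
    (ε : ℝ) (hε : 0 < ε)
    (u v w : H) (hu : u ∈ C) (hv : v ∈ C) (hw : w ∈ C)
    (h1 : ‖u - v‖ ≤ ε / (2 * (d : ℝ) * (2 + τ)))
    (h2 : ⟪G u - u, w - u⟫ ≤ ε / 2) :
    ⟪G v - v, w - v⟫ ≤ ε := by
  set δ := ‖u - v‖ with hδ
  have hδ0 : (0:ℝ) ≤ δ := norm_nonneg _
  have hd1 : (1:ℝ) ≤ (d:ℝ) := by exact_mod_cast hd
  have hwv : ‖w - v‖ ≤ (d:ℝ) := hbd w hw v hv
  have hdu : ‖G u - u‖ ≤ (d:ℝ) := hbd _ (hGm hu) u hu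
  have hGuv : ‖G v - G u‖ ≤ τ * δ := by
    have := hG v hv u hu
    simpa [hδ, norm_sub_rev u v] using this
  have key : ⟪G v - v, w - v⟫ = ⟪G u - u, w - u⟫ + ⟪(G v - G u) + (u - v), w - v⟫
      + ⟪G u - u, u - v⟫ := by
    simp only [inner_add_left, inner_sub_left, inner_add_right, inner_sub_right]
    ring
  have hA : ⟪(G v - G u) + (u - v), w - v⟫ ≤ (τ * δ + δ) * (d:ℝ) := by
    calc ⟪(G v - G u) + (u - v), w - v⟫ ≤ ‖(G v - G u) + (u - v)‖ * ‖w - v‖ :=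
          real_inner_le_norm _ _
      _ ≤ (τ * δ + δ) * (d:ℝ) := by
          apply mul_le_mul _ hwv (norm_nonneg _) (by positivity)
          calc ‖(G v - G u) + (u - v)‖ ≤ ‖G v - G u‖ + ‖u - v‖ := norm_add_le _ _
            _ ≤ τ * δ + δ := by rw [← hδ]; linarith
  have hB : ⟪G u - u, u - v⟫ ≤ (d:ℝ) * δ := by
    calc ⟪G u - u, u - v⟫ ≤ ‖G u - u‖ * ‖u - v‖ := real_inner_le_norm _ _
      _ ≤ (d:ℝ) * δ := by rw [← hδ]; exact mul_le_mul_of_nonneg_right hdu hδ0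
  have hden : (0:ℝ) < 2 * (d:ℝ) * (2 + τ) := by positivity
  have h1' : δ * (2 * (d:ℝ) * (2 + τ)) ≤ ε := by
    rw [← le_div_iff₀ hden]; exact h1
  nlinarith [key, hA, hB, h2]
end

section
/- Let H be a real Hilbert space, C ⊆ H a nonempty closed convex set (not assumed bounded), T : C → C nonexpansive, G : C → C a τ-contraction (0 ≤ τ < 1), (λ_n) ⊆ (0,1], and d > 0. Suppose v ∈ C satisfies T(v) = v, w ∈ C satisfies G(w) = w, and ‖u₀ − v‖ ≤ d/2, ‖v − G(v)‖ ≤ d(1−τ)/4, ‖v − w‖ ≤ d/(4(1+τ)). Define u_{n+1} := (1−λ_{n+1})·T(u_n) + λ_{n+1}·G(T(u_n)), and let (v_n) ⊆ C satisfy v_n = (1−λ_n)·T(v_n) + λ_n·G(T(v_n)) for all n. Then for all n ∈ ℕ: ‖u_n − v‖ ≤ d/2, ‖v_n − v‖ ≤ d/4, and ‖G(v_n) − v‖ ≤ d/2; in particular all members of the sequences (u_n), (v_n) and (G(v_n)) lie in the closed ball of radius d/2 around v. -/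
open scoped RealInnerProductSpace

/-- The boundedness assumption on `C` can be dropped: under the stated fixed-point
hypotheses, the iteration sequence `(u_n)`, the resolvent sequence `(v_n)` and
`(G(v_n))` all remain in the closed ball of radius `d/2` around the fixed point `v`. -/
theorem hsdm_sequences_remain_bounded
    {H : Type*} [NormedAddCommGroup H] [InnerProductSpace ℝ H] [CompleteSpace H]
    (C : Set H) (hne : C.Nonempty) (hcl : IsClosed C) (hcv : Convex ℝ C)
    (T : H → H) (hTm : Set.MapsTo T C C)
    (hT : ∀ x ∈ C, ∀ y ∈ C, ‖T x - T y‖ ≤ ‖x - y‖)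
    (τ : ℝ) (hτ0 : 0 ≤ τ) (hτ1 : τ < 1)
    (G : H → H) (hGm : Set.MapsTo G C C)
    (hG : ∀ x ∈ C, ∀ y ∈ C, ‖G x - G y‖ ≤ τ * ‖x - y‖)
    (lam : ℕ → ℝ) (hlam : ∀ n, lam n ∈ Set.Ioc (0 : ℝ) 1)
    (d : ℝ) (hd : 0 < d)
    (v : H) (hvC : v ∈ C) (hvfix : T v = v)
    (w : H) (hwC : w ∈ C) (hwfix : G w = w)
    (u : ℕ → H) (hu0C : u 0 ∈ C) (hu0 : ‖u 0 - v‖ ≤ d / 2)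
    (hvG : ‖v - G v‖ ≤ d * (1 - τ) / 4)
    (hvw : ‖v - w‖ ≤ d / (4 * (1 + τ)))
    (hrec : ∀ n, u (n + 1) = (1 - lam (n + 1)) • T (u n) + lam (n + 1) • G (T (u n)))
    (vs : ℕ → H) (hvsC : ∀ n, vs n ∈ C)
    (hvs : ∀ n, vs n = (1 - lam n) • T (vs n) + lam n • G (T (vs n))) :
    ∀ n : ℕ, ‖u n - v‖ ≤ d / 2 ∧ ‖vs n - v‖ ≤ d / 4 ∧ ‖G (vs n) - v‖ ≤ d / 2 := by
  have hτ' : (0:ℝ) < 1 - τ := by linarith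
  have hGv : ‖G v - v‖ ≤ d * (1 - τ) / 4 := by rw [norm_sub_rev]; exact hvG
  -- the bound on the resolvent sequence
  have hvsb : ∀ n, ‖vs n - v‖ ≤ d / 4 := by
    intro n
    obtain ⟨hl0, hl1⟩ := hlam n
    set r := ‖vs n - v‖ with hr
    have hr0 : 0 ≤ r := norm_nonneg _
    have hTvs : ‖T (vs n) - v‖ ≤ r := by
      have := hT (vs n) (hvsC n) v hvC
      rwa [hvfix] at this
    have hGT : ‖G (T (vs n)) - v‖ ≤ τ * r + d * (1 - τ) / 4 := by
      have h1 : ‖G (T (vs n)) - G v‖ ≤ τ * ‖T (vs n) - v‖ :=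
        hG _ (hTm (hvsC n)) v hvC
      calc ‖G (T (vs n)) - v‖ = ‖(G (T (vs n)) - G v) + (G v - v)‖ := by
            rw [sub_add_sub_cancel]
        _ ≤ ‖G (T (vs n)) - G v‖ + ‖G v - v‖ := norm_add_le _ _
        _ ≤ τ * r + d * (1 - τ) / 4 := by
            have := mul_le_mul_of_nonneg_left hTvs hτ0
            linarith
    have hdecomp : vs n - v = (1 - lam n) • (T (vs n) - v) + lam n • (G (T (vs n)) - v) := by
      nth_rewrite 1 [hvs n]
      module
    have key : r ≤ (1 - lam n) * r + lam n * (τ * r + d * (1 - τ) / 4) := by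
      calc r = ‖(1 - lam n) • (T (vs n) - v) + lam n • (G (T (vs n)) - v)‖ := by
            rw [hr, hdecomp]
        _          ≤ ‖(1 - lam n) • (T (vs n) - v)‖ + ‖lam n • (G (T (vs n)) - v)‖ := norm_add_le _ _
        _ = (1 - lam n) * ‖T (vs n) - v‖ + lam n * ‖G (T (vs n)) - v‖ := by
            rw [norm_smul, norm_smul, Real.norm_of_nonneg (by linarith),
              Real.norm_of_nonneg (le_of_lt hl0)]
        _ ≤ (1 - lam n) * r + lam n * (τ * r + d * (1 - τ) / 4) := by
            have h1 := mul_le_mul_of_nonneg_left hTvs (by linarith : (0:ℝ) ≤ 1 - lam n)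
            have h2 := mul_le_mul_of_nonneg_left hGT (le_of_lt hl0)
            linarith
    nlinarith [mul_pos hl0 hτ', key]
  -- bound on G (vs n)
  have hGvsb : ∀ n, ‖G (vs n) - v‖ ≤ d / 2 := by
    intro n
    have h1 : ‖G (vs n) - G v‖ ≤ τ * ‖vs n - v‖ := hG _ (hvsC n) v hvC
    have h2 := mul_le_mul_of_nonneg_left (hvsb n) hτ0
    calc ‖G (vs n) - v‖ = ‖(G (vs n) - G v) + (G v - v)‖ := by rw [sub_add_sub_cancel]
      _ ≤ ‖G (vs n) - G v‖ + ‖G v - v‖ := norm_add_le _ _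
      _ ≤ d / 2 := by nlinarith
  -- bound on u by induction
  have hub : ∀ n, u n ∈ C ∧ ‖u n - v‖ ≤ d / 2 := by
    intro n
    induction n with
    | zero => exact ⟨hu0C, hu0⟩
    | succ n ih =>
      obtain ⟨huC, hun⟩ := ih
      obtain ⟨hl0, hl1⟩ := hlam (n + 1)
      have hTu : ‖T (u n) - v‖ ≤ d / 2 := by
        have := hT (u n) huC v hvC
        rw [hvfix] at this
        exact this.trans hun
      have hGT : ‖G (T (u n)) - v‖ ≤ τ * (d / 2) + d * (1 - τ) / 4 := by
        have h1 : ‖G (T (u n)) - G v‖ ≤ τ * ‖T (u n) - v‖ := hG _ (hTm huC) v hvC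
        have h2 := mul_le_mul_of_nonneg_left hTu hτ0
        calc ‖G (T (u n)) - v‖ = ‖(G (T (u n)) - G v) + (G v - v)‖ := by
              rw [sub_add_sub_cancel]
          _ ≤ ‖G (T (u n)) - G v‖ + ‖G v - v‖ := norm_add_le _ _
          _ ≤ τ * (d / 2) + d * (1 - τ) / 4 := by linarith
      constructor
      · rw [hrec n]
        exact hcv (hTm huC) (hGm (hTm huC)) (by linarith) (le_of_lt hl0) (by ring)
      · have hdecomp : u (n + 1) - v
            = (1 - lam (n + 1)) • (T (u n) - v) + lam (n + 1) • (G (T (u n)) - v) := by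
          rw [hrec n]; module
        rw [hdecomp]
        calc ‖(1 - lam (n + 1)) • (T (u n) - v) + lam (n + 1) • (G (T (u n)) - v)‖
            ≤ ‖(1 - lam (n + 1)) • (T (u n) - v)‖ + ‖lam (n + 1) • (G (T (u n)) - v)‖ :=
              norm_add_le _ _
          _ = (1 - lam (n + 1)) * ‖T (u n) - v‖ + lam (n + 1) * ‖G (T (u n)) - v‖ := by
              rw [norm_smul, norm_smul, Real.norm_of_nonneg (by linarith),
                Real.norm_of_nonneg (le_of_lt hl0)]
          _ ≤ d / 2 := by
              have h1 := mul_le_mul_of_nonneg_left hTu (by linarith : (0:ℝ) ≤ 1 - lam (n+1))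
              have h2 := mul_le_mul_of_nonneg_left hGT (le_of_lt hl0)
              nlinarith [mul_pos hl0 (mul_pos hd hτ')]
  exact fun n => ⟨(hub n).2, hvsb n, hGvsb n⟩
end

section
/- Let H be a real Hilbert space, d ≥ 1 an integer, C ⊆ H a nonempty closed convex set with ‖x − y‖ ≤ d for all x, y ∈ C, and T_1, …, T_N : C → C nonexpansive maps (N ≥ 2). Suppose ρ̂ : (0,∞) → (0,∞) satisfies: (a) ρ̂(ε') ≤ ε' for all ε' > 0, and (b) for every y ∈ C and ε' > 0, if ‖(T_N ∘ ⋯ ∘ T_1)(y) − y‖ < ρ̂(ε') then ‖T_i(y) − y‖ < ε' for all i ∈ {1,…,N}. Then for every x ∈ C, every ε > 0 and every k ∈ {1,…,N−1}: if ‖(T_{N−k} ∘ ⋯ ∘ T_1 ∘ T_N ∘ ⋯ ∘ T_{N−k+1})(x) − x‖ < ρ̂(ε/(2N+1)), then ‖T_i(x) − x‖ < ε for all i ∈ {1,…,N}. -/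
open scoped RealInnerProductSpace

/-- `cyc N m` is the unique index in `{1, …, N}` congruent to `m` modulo `N`. -/
def cyc (N m : ℕ) : ℕ := if m % N = 0 then N else m % N

/-- `compShift T N s` is the composition `T [N+s] ∘ ⋯ ∘ T [1+s]`
(apply `T [1+s]` first, then `T [2+s]`, …, finally `T [N+s]`).  In particular
`compShift T N 0 = T N ∘ ⋯ ∘ T 1` and, for `1 ≤ k ≤ N−1`, `compShift T N (N−k)`
is the cyclic shift `T (N−k) ∘ ⋯ ∘ T 1 ∘ T N ∘ ⋯ ∘ T (N−k+1)`. -/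
def compShift {H : Type*} (T : ℕ → H → H) (N s : ℕ) (x : H) : H :=
  (List.range N).foldl (fun y j => T (cyc N (j + 1 + s)) y) x

/-!
Write the cyclic shift as `U = A ∘ B` and the original composition as `S = B ∘ A`, where `B`
applies `T (N−k+1), …, T N` and `A` applies `T 1, …, T (N−k)`. For `y := B x` we have
`S y = B (U x)`, so `‖S y − y‖ ≤ ‖U x − x‖` and the hypothesis on `S` says that every `T i`
moves `y` by less than `ε' = ε / (2N+1)`. Hence `A` moves `y` by at most `(N−k) ε'`, so
`‖x − y‖ ≤ ‖x − U x‖ + ‖A y − y‖ < (N−k+1) ε'`, and nonexpansiveness gives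
`‖T i x − x‖ ≤ 2 ‖x − y‖ + ‖T i y − y‖ < (2(N−k)+3) ε' ≤ ε`.
-/

open Set

lemma cyc_add_one {N : ℕ} (hN : 0 < N) (m : ℕ) : cyc N (m + 1) = m % N + 1 := by
  have hm : m % N < N := Nat.mod_lt m hN
  rcases Nat.lt_or_ge (m % N + 1) N with h | h
  · rw [cyc, ← Nat.mod_add_mod, Nat.mod_eq_of_lt h, if_neg (by omega)]
  · rw [cyc, ← Nat.mod_add_mod, (by omega : m % N + 1 = N), Nat.mod_self, if_pos rfl]

section compList

variable {X : Type*}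

/-- `compList T [i₁, …, iₙ] = T iₙ ∘ ⋯ ∘ T i₁`. -/
def compList (T : ℕ → X → X) (l : List ℕ) (x : X) : X :=
  l.foldl (fun y i => T i y) x

variable {T : ℕ → X → X}

@[simp]
lemma compList_nil (x : X) : compList T [] x = x := rfl

@[simp]
lemma compList_cons (i : ℕ) (l : List ℕ) (x : X) :
    compList T (i :: l) x = compList T l (T i x) := rfl

lemma compList_append (l₁ l₂ : List ℕ) (x : X) :
    compList T (l₁ ++ l₂) x = compList T l₂ (compList T l₁ x) :=
  List.foldl_append

lemma compShift_eq_compList_rotate (N s : ℕ) :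
    compShift T N s = compList T ((List.range' 1 N).rotate s) := by
  have hidx : (List.range N).map (fun j => cyc N (j + 1 + s)) = (List.range' 1 N).rotate s := by
    refine List.ext_getElem (by simp) fun j hj _ => ?_
    have hN : 0 < N := by rw [List.length_map, List.length_range] at hj; omega
    simp [List.getElem_rotate, Nat.add_right_comm j 1 s, cyc_add_one hN]
    omega
  funext x
  rw [compList, ← hidx, List.foldl_map, compShift]

variable {C : Set X}

lemma mapsTo_compList {l : List ℕ} (hTm : ∀ i ∈ l, MapsTo (T i) C C) :
    MapsTo (compList T l) C C := by
  induction l with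
  | nil => exact mapsTo_id C
  | cons i l ih =>
    simp only [List.forall_mem_cons] at hTm
    exact (ih hTm.2).comp hTm.1

variable [PseudoMetricSpace X]

lemma lipschitzOnWith_compList {l : List ℕ} (hTm : ∀ i ∈ l, MapsTo (T i) C C)
    (hT : ∀ i ∈ l, LipschitzOnWith 1 (T i) C) : LipschitzOnWith 1 (compList T l) C := by
  induction l with
  | nil => exact LipschitzWith.id.lipschitzOnWith
  | cons i l ih =>
    simp only [List.forall_mem_cons] at hTm hT
    have h := (ih hTm.2 hT.2).comp hT.1 hTm.1
    rwa [mul_one] at h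

lemma dist_compList_self_le {l : List ℕ} (hTm : ∀ i ∈ l, MapsTo (T i) C C)
    (hT : ∀ i ∈ l, LipschitzOnWith 1 (T i) C) {y : X} (hy : y ∈ C) {δ : ℝ}
    (hδ : ∀ i ∈ l, dist (T i y) y ≤ δ) : dist (compList T l y) y ≤ l.length * δ := by
  induction l with
  | nil => simp
  | cons i l ih =>
    simp only [List.forall_mem_cons] at hTm hT hδ
    have hstep : dist (compList T l (T i y)) (compList T l y) ≤ dist (T i y) y := by
      simpa using (lipschitzOnWith_compList hTm.2 hT.2).dist_le_mul _ (hTm.1 hy) _ hy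
    calc dist (compList T (i :: l) y) y
        ≤ dist (compList T l (T i y)) (compList T l y) + dist (compList T l y) y :=
          dist_triangle _ _ _
      _ ≤ δ + l.length * δ := add_le_add (hstep.trans hδ.1) (ih hTm.2 hT.2 hδ.2)
      _ = (i :: l).length * δ := by push_cast [List.length_cons]; ring

end compList

lemma LipschitzOnWith.dist_apply_self_le {X : Type*} [PseudoMetricSpace X] {C : Set X}
    {f : X → X} (hf : LipschitzOnWith 1 f C) {x y : X} (hx : x ∈ C) (hy : y ∈ C) :
    dist (f x) x ≤ 2 * dist x y + dist (f y) y := by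
  have hxy : dist (f x) (f y) ≤ dist x y := by simpa using hf.dist_le_mul x hx y hy
  calc dist (f x) x ≤ dist (f x) (f y) + dist (f y) y + dist y x := dist_triangle4 _ _ _ _
    _ ≤ 2 * dist x y + dist (f y) y := by rw [dist_comm y x]; linarith

theorem dist_apply_self_lt_of_dist_compList_append_comm_lt {X : Type*} [PseudoMetricSpace X]
    {C : Set X} {T : ℕ → X → X} {a b : List ℕ} (hTm : ∀ i ∈ a ++ b, MapsTo (T i) C C)
    (hT : ∀ i ∈ a ++ b, LipschitzOnWith 1 (T i) C) {ρ δ : ℝ} (hρδ : ρ ≤ δ)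
    (hbau : ∀ y ∈ C, dist (compList T (a ++ b) y) y < ρ → ∀ i ∈ a ++ b, dist (T i y) y < δ)
    {x : X} (hx : x ∈ C) (hshift : dist (compList T (b ++ a) x) x < ρ) :
    ∀ i ∈ a ++ b, dist (T i x) x < (2 * a.length + 3) * δ := by
  simp only [List.forall_mem_append] at hTm hT
  set y := compList T b x
  have hy : y ∈ C := mapsTo_compList hTm.2 hx
  have hshift_y : dist (compList T (a ++ b) y) y < ρ := by
    rw [show compList T (a ++ b) y = compList T b (compList T (b ++ a) x) by
      simp only [y, compList_append]]
    exact ((lipschitzOnWith_compList hTm.2 hT.2).dist_le_mul _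
      (mapsTo_compList (List.forall_mem_append.2 hTm.symm) hx) _ hx).trans_lt (by simpa using hshift)
  have hmove := hbau y hy hshift_y
  rw [compList_append] at hshift
  have hay : dist (compList T a y) y ≤ a.length * δ :=
    dist_compList_self_le hTm.1 hT.1 hy fun i hi => (hmove i (List.mem_append_left b hi)).le
  have hxy : dist x y < (a.length + 1) * δ := by
    calc dist x y ≤ dist x (compList T a y) + dist (compList T a y) y := dist_triangle _ _ _
      _ < ρ + a.length * δ := by
          rw [dist_comm]
          exact add_lt_add_of_lt_of_le hshift hay
      _ ≤ (a.length + 1) * δ := by linarith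
  intro i hi
  have hTi : LipschitzOnWith 1 (T i) C := by
    rcases List.mem_append.1 hi with h | h
    exacts [hT.1 i h, hT.2 i h]
  calc dist (T i x) x ≤ 2 * dist x y + dist (T i y) y := hTi.dist_apply_self_le hx hy
    _ < 2 * ((a.length + 1) * δ) + δ := by linarith [hmove i hi]
    _ = (2 * a.length + 3) * δ := by ring

theorem quantitative_suzuki_general
    {H : Type*} [NormedAddCommGroup H]
    (C : Set H)
    (N : ℕ) (T : ℕ → H → H)
    (hTm : ∀ i ∈ Finset.Icc 1 N, Set.MapsTo (T i) C C)
    (hT : ∀ i ∈ Finset.Icc 1 N, ∀ x ∈ C, ∀ y ∈ C, ‖T i x - T i y‖ ≤ ‖x - y‖)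
    (ρ : ℝ → ℝ)
    (hρle : ∀ ε' : ℝ, 0 < ε' → ρ ε' ≤ ε')
    (hρ : ∀ y ∈ C, ∀ ε' : ℝ, 0 < ε' → ‖compShift T N 0 y - y‖ < ρ ε' →
      ∀ i ∈ Finset.Icc 1 N, ‖T i y - y‖ < ε') :
    ∀ x ∈ C, ∀ ε : ℝ, 0 < ε → ∀ k ∈ Finset.Icc 1 (N - 1),
      ‖compShift T N (N - k) x - x‖ < ρ (ε / (2 * N + 1)) →
      ∀ i ∈ Finset.Icc 1 N, ‖T i x - x‖ < ε := by
  intro x hx ε hε k hk hshift i hi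
  set δ := ε / (2 * N + 1)
  have hδ : 0 < δ := by positivity
  set l := List.range' 1 N
  set s := N - k
  have hlen : 2 * (l.take s).length + 3 ≤ 2 * N + 1 := by
    rw [Finset.mem_Icc] at hk
    simp only [l, s, List.length_take, List.length_range']
    omega
  have hS : compShift T N 0 = compList T (l.take s ++ l.drop s) := by
    rw [List.take_append_drop, compShift_eq_compList_rotate, List.rotate_zero]
  have hU : compShift T N s = compList T (l.drop s ++ l.take s) := by
    rw [← List.rotate_eq_drop_append_take (by simp [l, s]), compShift_eq_compList_rotate]
  have hmem : ∀ j, j ∈ l.take s ++ l.drop s ↔ j ∈ Finset.Icc 1 N := by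
    simp only [List.take_append_drop, l, List.mem_range'_1, Finset.mem_Icc]
    omega
  have hlip : ∀ j ∈ l.take s ++ l.drop s, LipschitzOnWith 1 (T j) C := fun j hj =>
    lipschitzOnWith_iff_norm_sub_le.2 fun x hx y hy => by
      simpa using hT j ((hmem j).1 hj) x hx y hy
  have key := dist_apply_self_lt_of_dist_compList_append_comm_lt
    (fun j hj => hTm j ((hmem j).1 hj)) hlip (hρle δ hδ)
    (fun y hy hy' j hj => by
      simpa [dist_eq_norm] using hρ y hy δ hδ (by rwa [hS, ← dist_eq_norm]) j ((hmem j).1 hj))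
    hx (by rwa [← hU, dist_eq_norm]) i ((hmem i).2 hi)
  rw [← dist_eq_norm]
  calc dist (T i x) x < (2 * (l.take s).length + 3) * δ := key
    _ ≤ (2 * N + 1) * δ := mul_le_mul_of_nonneg_right (by exact_mod_cast hlen) hδ.le
    _ = ε := by simp only [δ]; field_simp

/-- Quantitative version of Suzuki's theorem: a modulus for the Bauschke condition for
one cyclic order yields one for all cyclic orders. -/
theorem quantitative_suzuki
    {H : Type*} [NormedAddCommGroup H] [InnerProductSpace ℝ H] [CompleteSpace H]
    (d : ℕ) (hd : 1 ≤ d)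
    (C : Set H) (hne : C.Nonempty) (hcl : IsClosed C) (hcv : Convex ℝ C)
    (hbd : ∀ x ∈ C, ∀ y ∈ C, ‖x - y‖ ≤ (d : ℝ))
    (N : ℕ) (hN : 2 ≤ N) (T : ℕ → H → H)
    (hTm : ∀ i ∈ Finset.Icc 1 N, Set.MapsTo (T i) C C)
    (hT : ∀ i ∈ Finset.Icc 1 N, ∀ x ∈ C, ∀ y ∈ C, ‖T i x - T i y‖ ≤ ‖x - y‖)
    (ρ : ℝ → ℝ) (hρpos : ∀ ε' : ℝ, 0 < ε' → 0 < ρ ε')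
    (hρle : ∀ ε' : ℝ, 0 < ε' → ρ ε' ≤ ε')
    (hρ : ∀ y ∈ C, ∀ ε' : ℝ, 0 < ε' → ‖compShift T N 0 y - y‖ < ρ ε' →
      ∀ i ∈ Finset.Icc 1 N, ‖T i y - y‖ < ε') :
    ∀ x ∈ C, ∀ ε : ℝ, 0 < ε → ∀ k ∈ Finset.Icc 1 (N - 1),
      ‖compShift T N (N - k) x - x‖ < ρ (ε / (2 * N + 1)) →
      ∀ i ∈ Finset.Icc 1 N, ‖T i x - x‖ < ε :=
  quantitative_suzuki_general C N T hTm hT ρ hρle hρ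
end

section
/- Let H be a real Hilbert space, d ≥ 1 an integer, C ⊆ H a nonempty closed convex set with ‖x − y‖ ≤ d for all x, y ∈ C, T_1, …, T_N : C → C nonexpansive (N ≥ 1), and G : C → C a τ-contraction (0 ≤ τ < 1). Let (λ_n) ⊆ (0,1] and suppose: χ : ℕ⁺ → ℕ satisfies λ_n ≤ 1/k for all k ∈ ℕ⁺ and all n ≥ χ(k); φ₃ : (0,∞) × ℕ → ℕ satisfies φ₃(δ, n) ≥ n and Π_{i=n}^{m}(1 − λ_i(1−τ)) ≤ δ for all δ > 0, n ∈ ℕ and m ≥ φ₃(δ, n); and φ₄ : (0,∞) → ℕ satisfies Σ_{i=φ₄(δ)}^{∞} |λ_{i+N} − λ_i| ≤ δ for all δ > 0. Let u₀ ∈ C and u_{n+1} := (1−λ_{n+1})·T_{[n+1]}(u_n) + λ_{n+1}·G(T_{[n+1]}(u_n)), where [m] denotes the unique index in {1,…,N} with [m] ≡ m (mod N). Then for every ε > 0 and every n ≥ χ̂(ε) := max{φ₃(ε/(4d), φ₄(ε/(4d)) + N), χ(⌈2Nd/ε⌉)} one has ‖u_n − (T_{[n+N]} ∘ ⋯ ∘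 T_{[n+1]})(u_n)‖ ≤ ε. -/
open scoped RealInnerProductSpace

/-- `chiHat` is the rate `χ̂(ε) := max{φ₃(ε/(4d), φ₄(ε/(4d)) + N), χ(⌈2Nd/ε⌉)}`. -/
noncomputable def chiHat (d N : ℕ) (χ : ℕ → ℕ) (φ₃ : ℝ → ℕ → ℕ) (φ₄ : ℝ → ℕ) (ε : ℝ) : ℕ :=
  max (φ₃ (ε / (4 * (d : ℝ))) (φ₄ (ε / (4 * (d : ℝ))) + N)) (χ ⌈2 * (N : ℝ) * (d : ℝ) / ε⌉₊)

lemma cyc_mem {N : ℕ} (hN : 1 ≤ N) (m : ℕ) : cyc N m ∈ Finset.Icc 1 N := by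
  have h := Nat.mod_lt m (show 0 < N by omega)
  unfold cyc
  split <;> simp only [Finset.mem_Icc] <;> omega

lemma cyc_add_N (N m : ℕ) : cyc N (m + N) = cyc N m := by
  simp [cyc, Nat.add_mod_right]

/-- Quantitative asymptotic regularity for the hybrid steepest descent method with a
finite family of nonexpansive mappings. -/
theorem hsdm_family_asymptotic_regularity
    {H : Type*} [NormedAddCommGroup H] [InnerProductSpace ℝ H] [CompleteSpace H]
    (d : ℕ) (hd : 1 ≤ d)
    (C : Set H) (hne : C.Nonempty) (hcl : IsClosed C) (hcv : Convex ℝ C)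
    (hbd : ∀ x ∈ C, ∀ y ∈ C, ‖x - y‖ ≤ (d : ℝ))
    (N : ℕ) (hN : 1 ≤ N) (T : ℕ → H → H)
    (hTm : ∀ i ∈ Finset.Icc 1 N, Set.MapsTo (T i) C C)
    (hT : ∀ i ∈ Finset.Icc 1 N, ∀ x ∈ C, ∀ y ∈ C, ‖T i x - T i y‖ ≤ ‖x - y‖)
    (τ : ℝ) (hτ0 : 0 ≤ τ) (hτ1 : τ < 1)
    (G : H → H) (hGm : Set.MapsTo G C C)
    (hG : ∀ x ∈ C, ∀ y ∈ C, ‖G x - G y‖ ≤ τ * ‖x - y‖)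
    (lam : ℕ → ℝ) (hlam : ∀ n, lam n ∈ Set.Ioc (0 : ℝ) 1)
    (χ : ℕ → ℕ) (hχ : ∀ k : ℕ, 1 ≤ k → ∀ n ≥ χ k, lam n ≤ 1 / (k : ℝ))
    (φ₃ : ℝ → ℕ → ℕ)
    (hφ₃ge : ∀ δ : ℝ, 0 < δ → ∀ n : ℕ, n ≤ φ₃ δ n)
    (hφ₃ : ∀ δ : ℝ, 0 < δ → ∀ n : ℕ, ∀ m ≥ φ₃ δ n,
      ∏ i ∈ Finset.Icc n m, (1 - lam i * (1 - τ)) ≤ δ)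
    (φ₄ : ℝ → ℕ)
    (hφ₄ : ∀ δ : ℝ, 0 < δ → ∀ m : ℕ,
      ∑ i ∈ Finset.Icc (φ₄ δ) m, |lam (i + N) - lam i| ≤ δ)
    (u : ℕ → H) (hu0 : u 0 ∈ C)
    (hrec : ∀ n, u (n + 1) = (1 - lam (n + 1)) • T (cyc N (n + 1)) (u n) +
      lam (n + 1) • G (T (cyc N (n + 1)) (u n))) :
    ∀ ε : ℝ, 0 < ε → ∀ n ≥ chiHat d N χ φ₃ φ₄ ε,
      ‖u n - compShift T N n (u n)‖ ≤ ε := by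
  have hd0 : (0 : ℝ) < d := by exact_mod_cast hd
  -- all iterates stay in C
  have hmem : ∀ m, u m ∈ C := by
    intro m
    induction m with
    | zero => exact hu0
    | succ m ih =>
      rw [hrec m]
      have hi := cyc_mem hN (m + 1)
      have h1 : T (cyc N (m + 1)) (u m) ∈ C := hTm _ hi ih
      have h2 : G (T (cyc N (m + 1)) (u m)) ∈ C := hGm h1
      have hl := hlam (m + 1)
      exact hcv h1 h2 (by linarith [hl.2]) (le_of_lt hl.1) (by ring)
  have hud : ∀ a b : ℕ, ‖u a - u b‖ ≤ (d : ℝ) := fun a b => hbd _ (hmem a) _ (hmem b)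
  -- factor bounds
  have hfac : ∀ i : ℕ, 0 ≤ 1 - lam i * (1 - τ) ∧ 1 - lam i * (1 - τ) ≤ 1 := by
    intro i
    have hl := hlam i
    constructor <;> nlinarith [hl.1, hl.2]
  -- key one-step recurrence for c m = ‖u (m+N) - u m‖
  have hrecN : ∀ m : ℕ, ‖u (m + 1 + N) - u (m + 1)‖ ≤
      (1 - lam (m + 1) * (1 - τ)) * ‖u (m + N) - u m‖ +
      (d : ℝ) * |lam (m + 1 + N) - lam (m + 1)| := by
    intro m
    have e : m + 1 + N = m + N + 1 := by omega
    rw [e]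
    have hc : cyc N (m + N + 1) = cyc N (m + 1) := by
      have e2 : m + N + 1 = (m + 1) + N := by omega
      rw [e2, cyc_add_N]
    have h1 := hrec (m + N)
    have h2 := hrec m
    rw [hc] at h1
    set i := cyc N (m + 1) with hi
    have hiMem : i ∈ Finset.Icc 1 N := cyc_mem hN _
    set x := u (m + N) with hx
    set y := u m with hy
    have hxC : x ∈ C := hmem _
    have hyC : y ∈ C := hmem _
    have hTxC : T i x ∈ C := hTm _ hiMem hxC
    have hTyC : T i y ∈ C := hTm _ hiMem hyC
    have hGTxC : G (T i x) ∈ C := hGm hTxC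
    set l1 := lam (m + 1) with hl1
    set l2 := lam (m + N + 1) with hl2
    have key : u (m + N + 1) - u (m + 1) =
        ((1 - l1) • (T i x - T i y) + l1 • (G (T i x) - G (T i y))) +
        (l2 - l1) • (G (T i x) - T i x) := by
      rw [h1, h2]; module
    have hl1 := hlam (m + 1)
    have ht : ‖T i x - T i y‖ ≤ ‖x - y‖ := hT _ hiMem _ hxC _ hyC
    have hg : ‖G (T i x) - G (T i y)‖ ≤ τ * ‖T i x - T i y‖ := hG _ hTxC _ hTyC
    have hgt : ‖G (T i x) - T i x‖ ≤ (d : ℝ) := hbd _ hGTxC _ hTxC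
    calc ‖u (m + N + 1) - u (m + 1)‖
        ≤ ‖(1 - l1) • (T i x - T i y) + l1 • (G (T i x) - G (T i y))‖ +
          ‖(l2 - l1) • (G (T i x) - T i x)‖ := by rw [key]; exact norm_add_le _ _
      _ ≤ (‖(1 - l1) • (T i x - T i y)‖ + ‖l1 • (G (T i x) - G (T i y))‖) +
          ‖(l2 - l1) • (G (T i x) - T i x)‖ := by
            gcongr; exact norm_add_le _ _
      _ = |1 - l1| * ‖T i x - T i y‖ + |l1| * ‖G (T i x) - G (T i y)‖ +
          |l2 - l1| * ‖G (T i x) - T i x‖ := by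
            rw [norm_smul, norm_smul, norm_smul, Real.norm_eq_abs, Real.norm_eq_abs,
              Real.norm_eq_abs]
      _ ≤ (1 - l1 * (1 - τ)) * ‖x - y‖ + (d : ℝ) * |l2 - l1| := by
            rw [abs_of_nonneg (by linarith [hl1.2] : (0:ℝ) ≤ 1 - l1),
              abs_of_nonneg (le_of_lt hl1.1)]
            have h0 : (0:ℝ) ≤ ‖x - y‖ := norm_nonneg _
            have h1' : (0:ℝ) ≤ ‖T i x - T i y‖ := norm_nonneg _
            have h2' : (0:ℝ) ≤ |l2 - l1| := abs_nonneg _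
            nlinarith [hl1.1, hl1.2, mul_le_mul_of_nonneg_left ht
              (show (0:ℝ) ≤ 1 - l1 by linarith [hl1.2]),
              mul_le_mul_of_nonneg_left hg (le_of_lt hl1.1),
              mul_le_mul_of_nonneg_left ht (mul_nonneg (le_of_lt hl1.1) hτ0),
              mul_le_mul_of_nonneg_left hgt h2']
  -- iterated recurrence
  have hiter : ∀ p m : ℕ, p ≤ m → ‖u (m + N) - u m‖ ≤
      (∏ i ∈ Finset.Icc (p + 1) m, (1 - lam i * (1 - τ))) * ‖u (p + N) - u p‖ +
      (d : ℝ) * ∑ i ∈ Finset.Icc (p + 1) m, |lam (i + N) - lam i| := by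
    intro p m hpm
    induction m, hpm using Nat.le_induction with
    | base =>
      rw [Finset.Icc_eq_empty (by omega), Finset.prod_empty, Finset.sum_empty]
      simp
    | succ m hpm ih =>
      have hps : p + 1 ≤ m + 1 := by omega
      rw [Finset.prod_Icc_succ_top hps, Finset.sum_Icc_succ_top hps]
      have hstep := hrecN m
      have heq : m + 1 + N = (m + 1) + N := rfl
      have hf := hfac (m + 1)
      have hP : 0 ≤ ∏ i ∈ Finset.Icc (p + 1) m, (1 - lam i * (1 - τ)) :=
        Finset.prod_nonneg (fun i _ => (hfac i).1)
      have hS : 0 ≤ ∑ i ∈ Finset.Icc (p + 1) m, |lam (i + N) - lam i| :=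
        Finset.sum_nonneg (fun i _ => abs_nonneg _)
      have hcp : 0 ≤ ‖u (p + N) - u p‖ := norm_nonneg _
      have habs : 0 ≤ |lam (m + 1 + N) - lam (m + 1)| := abs_nonneg _
      nlinarith [mul_le_mul_of_nonneg_left ih hf.1,
        mul_nonneg (mul_nonneg hP hcp) (sub_nonneg.2 hf.2),
        mul_nonneg (mul_nonneg hd0.le hS) (sub_nonneg.2 hf.2)]
  -- main proof
  intro ε hε n hn
  set δ : ℝ := ε / (4 * (d : ℝ)) with hδdef
  have hδ : 0 < δ := by positivity
  have hnA : φ₃ δ (φ₄ δ + N) ≤ n := le_trans (le_max_left _ _) hn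
  have hnB : χ ⌈2 * (N : ℝ) * (d : ℝ) / ε⌉₊ ≤ n := le_trans (le_max_right _ _) hn
  set K : ℕ := ⌈2 * (N : ℝ) * (d : ℝ) / ε⌉₊ with hKdef
  have hN0 : (0 : ℝ) < N := by exact_mod_cast hN
  have hK1 : 1 ≤ K := Nat.one_le_ceil_iff.2 (by positivity)
  have hKpos : (0 : ℝ) < K := by exact_mod_cast hK1
  -- Step 1 : ‖u (n+N) - u n‖ ≤ ε/2
  have step1 : ‖u (n + N) - u n‖ ≤ ε / 2 := by
    set p : ℕ := φ₄ δ + N - 1 with hpdef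
    have hp1 : p + 1 = φ₄ δ + N := by omega
    have hpn : p ≤ n := by
      have := hφ₃ge δ hδ (φ₄ δ + N)
      omega
    have h := hiter p n hpn
    have hP : (∏ i ∈ Finset.Icc (p + 1) n, (1 - lam i * (1 - τ))) ≤ δ := by
      rw [hp1]
      exact hφ₃ δ hδ (φ₄ δ + N) n hnA
    have hP0 : 0 ≤ ∏ i ∈ Finset.Icc (p + 1) n, (1 - lam i * (1 - τ)) :=
      Finset.prod_nonneg (fun i _ => (hfac i).1)
    have hS : (∑ i ∈ Finset.Icc (p + 1) n, |lam (i + N) - lam i|) ≤ δ := by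
      refine le_trans (Finset.sum_le_sum_of_subset_of_nonneg ?_ fun i _ _ => abs_nonneg _)
        (hφ₄ δ hδ n)
      apply Finset.Icc_subset_Icc_left
      omega
    have hcp : ‖u (p + N) - u p‖ ≤ (d : ℝ) := hud _ _
    have hcp0 : 0 ≤ ‖u (p + N) - u p‖ := norm_nonneg _
    have hδd : δ * d = ε / 4 := by
      rw [hδdef]; field_simp
    nlinarith [mul_le_mul hP hcp hcp0 (le_of_lt hδ)]
  -- Step 2 : ‖u (n+N) - compShift T N n (u n)‖ ≤ ε/2
  have hlamK : ∀ k, n < k → lam k ≤ 1 / (K : ℝ) := by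
    intro k hk
    exact hχ K hK1 k (by omega)
  have step2key : ∀ j : ℕ,
      ((List.range j).foldl (fun y i => T (cyc N (i + 1 + n)) y) (u n)) ∈ C ∧
      ‖u (n + j) - (List.range j).foldl (fun y i => T (cyc N (i + 1 + n)) y) (u n)‖ ≤
        (j : ℝ) * ((d : ℝ) / K) := by
    intro j
    induction j with
    | zero => simpa using hmem n
    | succ j ih =>
      obtain ⟨ihC, ihB⟩ := ih
      set F := (List.range j).foldl (fun y i => T (cyc N (i + 1 + n)) y) (u n) with hF
      have hfold : (List.range (j + 1)).foldl (fun y i => T (cyc N (i + 1 + n)) y) (u n)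
          = T (cyc N (j + 1 + n)) F := by
        rw [List.range_succ, List.foldl_append, List.foldl_cons, List.foldl_nil]
      rw [hfold]
      have hidx : j + 1 + n = n + j + 1 := by omega
      rw [hidx]
      set i := cyc N (n + j + 1) with hi
      have hiMem : i ∈ Finset.Icc 1 N := cyc_mem hN _
      have hTFC : T i F ∈ C := hTm _ hiMem ihC
      constructor
      · exact hTFC
      · have hujC : u (n + j) ∈ C := hmem _
        have hTuC : T i (u (n + j)) ∈ C := hTm _ hiMem hujC
        have hGTuC : G (T i (u (n + j))) ∈ C := hGm hTuC
        have hrecj := hrec (n + j)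
        rw [show cyc N (n + j + 1) = i from rfl] at hrecj
        have key : u (n + (j + 1)) - T i F =
            (T i (u (n + j)) - T i F) +
            lam (n + j + 1) • (G (T i (u (n + j))) - T i (u (n + j))) := by
          have e : n + (j + 1) = (n + j) + 1 := rfl
          rw [e, hrecj]; module
        have hl := hlam (n + j + 1)
        have hlK : lam (n + j + 1) ≤ 1 / (K : ℝ) := hlamK _ (by omega)
        have hb : ‖G (T i (u (n + j))) - T i (u (n + j))‖ ≤ (d : ℝ) := hbd _ hGTuC _ hTuC
        calc ‖u (n + (j + 1)) - T i F‖
            ≤ ‖T i (u (n + j)) - T i F‖ +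
              ‖lam (n + j + 1) • (G (T i (u (n + j))) - T i (u (n + j)))‖ := by
              rw [key]; exact norm_add_le _ _
          _ ≤ ‖u (n + j) - F‖ + lam (n + j + 1) * (d : ℝ) := by
              gcongr
              · exact hT _ hiMem _ hujC _ ihC
              · rw [norm_smul, Real.norm_eq_abs, abs_of_nonneg (le_of_lt hl.1)]
                exact mul_le_mul_of_nonneg_left hb (le_of_lt hl.1)
          _ ≤ (j : ℝ) * ((d : ℝ) / K) + (1 / (K : ℝ)) * (d : ℝ) := by
              gcongr
          _ = ((j : ℕ) + 1 : ℝ) * ((d : ℝ) / K) := by field_simp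
          _ = ((j + 1 : ℕ) : ℝ) * ((d : ℝ) / K) := by push_cast; ring
  have step2 : ‖u (n + N) - compShift T N n (u n)‖ ≤ ε / 2 := by
    have h := (step2key N).2
    have hcs : compShift T N n (u n) =
        (List.range N).foldl (fun y i => T (cyc N (i + 1 + n)) y) (u n) := rfl
    rw [hcs]
    refine le_trans h ?_
    have hK : 2 * (N : ℝ) * (d : ℝ) / ε ≤ (K : ℝ) := Nat.le_ceil _
    rw [div_le_iff₀ hε] at hK
    rw [mul_div_assoc', div_le_iff₀ hKpos]
    nlinarith
  calc ‖u n - compShift T N n (u n)‖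
      ≤ ‖u n - u (n + N)‖ + ‖u (n + N) - compShift T N n (u n)‖ :=
        norm_sub_le_norm_sub_add_norm_sub _ _ _
    _ ≤ ε / 2 + ε / 2 := by
        rw [norm_sub_rev]
        exact add_le_add step1 step2
    _ = ε := by ring
end

section
/- Let H be a real Hilbert space, d ≥ 1 an integer, C ⊆ H a nonempty closed convex set with ‖x − y‖ ≤ d for all x, y ∈ C, T_1, …, T_N : C → C nonexpansive (N ≥ 1), and G : C → C a τ-contraction (0 ≤ τ < 1). Let (λ_n) ⊆ (0,1], χ : ℕ⁺ → ℕ with λ_n ≤ 1/k for all n ≥ χ(k), and φ₃ : (0,∞) × ℕ → ℕ with φ₃(δ, n) ≥ n and Π_{i=n}^{m}(1 − λ_i(1−τ)) ≤ δ for all m ≥ φ₃(δ, n). Let u₀ ∈ C, u_{n+1} := (1−λ_{n+1})·T_{[n+1]}(u_n) + λ_{n+1}·G(T_{[n+1]}(u_n)) where [m] is the unique index in {1,…,N} with [m] ≡ m (mod N), and let u* ∈ C. Let ε > 0, n₀ ∈ ℕ, g : ℕ → ℕ, and set ñ := g̃(φ₃(ε²/(3d²), n₀ + 1)) where g̃(n)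 := max{n, g(n)}. If (i) n₀ ≥ χ(⌈36d²/((1−τ)ε²)⌉), (ii) ⟨T_{[n+1]}(u_n) − u*, G(u*) − u*⟩ ≤ (1−τ)ε²/8 for all n with n₀ ≤ n ≤ ñ − 1, and (iii) ‖T_{[n+1]}(u*) − u*‖ ≤ ε²/(18d·max{ñ − n₀, 1}) for all n with n₀ ≤ n ≤ ñ − 1, then ‖u_{ñ} − u*‖ ≤ ε. -/
/-!
Write `a n = ‖u n - u*‖²`, `w n = λ n (1 - τ)` and `e n = ‖T_[n+1] u* - u*‖`. For `n ≥ n₀`,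
one step of the scheme satisfies `a (n+1) ≤ (1 - w (n+1)) a n + 3 d e n + w (n+1) ε²/3`:
the contraction `G` shrinks the distance by the factor `1 - w (n+1)`, while the cross term
`2 λ ⟪u (n+1) - u*, G u* - u*⟫` is controlled by (ii) together with `λ (n+1) d² ≤ (1 - τ) ε²/36`,
which is what (i) buys. Unrolling from `n₀` to `ñ` gives
`a ñ ≤ (∏ (1 - w i)) d² + 3 d ∑ e n + ε²/3`, where the product is at most `ε²/(3d²)` by the
choice of `φ₃` and `∑ e n ≤ ε²/(18 d)` by (iii); so `a ñ ≤ 5ε²/6`.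
-/

open scoped RealInnerProductSpace

/-- `gTil g n = max {n, g n}`. -/
def gTil (g : ℕ → ℕ) (n : ℕ) : ℕ := max n (g n)

open Finset

lemma cyc_mem_Icc {N : ℕ} (hN : 1 ≤ N) (m : ℕ) : cyc N m ∈ Icc 1 N := by
  have := Nat.mod_lt m hN
  unfold cyc
  split_ifs <;> rw [mem_Icc] <;> omega

lemma Finset.sum_le_of_le_div_max_card {ι : Type*} {s : Finset ι} {f : ι → ℝ} {c : ℝ}
    (hc : 0 ≤ c) (h : ∀ i ∈ s, f i ≤ c / (max #s 1 : ℕ)) : ∑ i ∈ s, f i ≤ c := by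
  rcases s.eq_empty_or_nonempty with rfl | hs
  · simpa using hc
  have hcard : (0 : ℝ) < #s := by exact_mod_cast hs.card_pos
  rw [max_eq_left hs.card_pos] at h
  calc ∑ i ∈ s, f i ≤ #s • (c / #s) := sum_le_card_nsmul s f _ h
    _ = c := by rw [nsmul_eq_mul]; field_simp

lemma mul_le_of_le_one_div_ceil {x a b : ℝ} (ha : 0 < a) (hb : 0 < b)
    (hx : x ≤ 1 / ⌈a / b⌉₊) : x * a ≤ b := by
  have hceil : a / b ≤ ⌈a / b⌉₊ := Nat.le_ceil _
  have hpos : 0 < a / b := by positivity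
  have hx' : x ≤ b / a := hx.trans <| by
    rw [one_div_le (hpos.trans_le hceil) (by positivity), one_div_div]; exact hceil
  rwa [le_div_iff₀ ha] at hx'

lemma le_prod_mul_add_sum_of_le_one_sub_mul_add {a b w : ℕ → ℝ} {c : ℝ} {m k : ℕ}
    (hmk : m ≤ k) (hw0 : ∀ n, 0 ≤ w n) (hw1 : ∀ n, w n ≤ 1) (hb : ∀ n, 0 ≤ b n)
    (hstep : ∀ n ∈ Ico m k, a (n + 1) ≤ (1 - w (n + 1)) * a n + b n + w (n + 1) * c) :
    a k ≤ (∏ i ∈ Icc (m + 1) k, (1 - w i)) * a m + ∑ n ∈ Ico m k, b n +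
      (1 - ∏ i ∈ Icc (m + 1) k, (1 - w i)) * c := by
  induction k, hmk using Nat.le_induction with
  | base => simp
  | succ k hmk ih =>
    have ih := ih fun n hn => hstep n (Ico_subset_Ico_right k.le_succ hn)
    have hk := hstep k (mem_Ico.mpr ⟨hmk, k.lt_succ_self⟩)
    rw [prod_Icc_succ_top (by omega), sum_Ico_succ_top hmk]
    have hS : 0 ≤ ∑ n ∈ Ico m k, b n := sum_nonneg fun n _ => hb n
    have hq0 : 0 ≤ 1 - w (k + 1) := sub_nonneg.mpr (hw1 _)
    have := mul_le_mul_of_nonneg_left ih hq0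
    nlinarith [mul_nonneg (hw0 (k + 1)) hS]

section

variable {H : Type*} [NormedAddCommGroup H] [InnerProductSpace ℝ H]

lemma norm_add_sq_le_norm_sq_add_two_inner (v w : H) :
    ‖v + w‖ ^ 2 ≤ ‖v‖ ^ 2 + 2 * ⟪v + w, w⟫ := by
  rw [norm_add_sq_real, inner_add_left, real_inner_self_eq_norm_sq]
  nlinarith [sq_nonneg ‖w‖]

lemma norm_convex_step_sub_sq_le {G : H → H} {y p : H} {l τ : ℝ} (hl0 : 0 ≤ l) (hl1 : l ≤ 1)
    (hG : ‖G y - G p‖ ≤ τ * ‖y - p‖) :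
    ‖(1 - l) • y + l • G y - p‖ ^ 2 ≤ (1 - l * (1 - τ)) ^ 2 * ‖y - p‖ ^ 2 +
      2 * l * ⟪y - p, G p - p⟫ + 2 * l ^ 2 * ⟪G y - y, G p - p⟫ := by
  set v := (1 - l) • (y - p) + l • (G y - G p)
  have hv : ‖v‖ ≤ (1 - l * (1 - τ)) * ‖y - p‖ :=
    calc ‖v‖ ≤ (1 - l) * ‖y - p‖ + l * ‖G y - G p‖ := by
          refine (norm_add_le _ _).trans_eq ?_
          rw [norm_smul, norm_smul, Real.norm_of_nonneg (sub_nonneg.mpr hl1),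
            Real.norm_of_nonneg hl0]
      _ ≤ (1 - l) * ‖y - p‖ + l * (τ * ‖y - p‖) := by gcongr
      _ = (1 - l * (1 - τ)) * ‖y - p‖ := by ring
  have hz : (1 - l) • y + l • G y - p = v + l • (G p - p) := by module
  have hz' : v + l • (G p - p) = (y - p) + l • (G y - y) := by module
  calc ‖(1 - l) • y + l • G y - p‖ ^ 2 ≤ ‖v‖ ^ 2 + 2 * ⟪v + l • (G p - p), l • (G p - p)⟫ := by
        rw [hz]; exact norm_add_sq_le_norm_sq_add_two_inner _ _
    _ ≤ ((1 - l * (1 - τ)) * ‖y - p‖) ^ 2 + 2 * ⟪v + l • (G p - p), l • (G p - p)⟫ := by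
        gcongr
    _ = _ := by
        rw [hz', real_inner_smul_right, inner_add_left, real_inner_smul_left]; ring

lemma norm_hsdm_step_sub_sq_le {C : Set H} {d : ℝ} (hbd : ∀ x ∈ C, ∀ y ∈ C, ‖x - y‖ ≤ d)
    {S G : H → H} (hSC : Set.MapsTo S C C) (hS : ∀ x ∈ C, ∀ y ∈ C, ‖S x - S y‖ ≤ ‖x - y‖)
    {τ : ℝ} (hGC : Set.MapsTo G C C) (hG : ∀ x ∈ C, ∀ y ∈ C, ‖G x - G y‖ ≤ τ * ‖x - y‖)
    {x p : H} (hx : x ∈ C) (hp : p ∈ C) {l ε : ℝ} (hl0 : 0 ≤ l) (hl1 : l ≤ 1)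
    (hτ0 : 0 ≤ τ) (hτ1 : τ ≤ 1) (hip : ⟪S x - p, G p - p⟫ ≤ (1 - τ) * ε ^ 2 / 8)
    (hld : l * d ^ 2 ≤ (1 - τ) * ε ^ 2 / 36) :
    ‖(1 - l) • S x + l • G (S x) - p‖ ^ 2 ≤
      (1 - l * (1 - τ)) * ‖x - p‖ ^ 2 + 3 * d * ‖S p - p‖ + l * (1 - τ) * (ε ^ 2 / 3) := by
  set q := 1 - l * (1 - τ)
  have hq0 : 0 ≤ q := by nlinarith
  have hq1 : q ≤ 1 := by nlinarith
  have hxd := hbd x hx p hp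
  have hSd := hbd _ (hSC hp) p hp
  have hSx : ‖S x - p‖ ≤ ‖x - p‖ + ‖S p - p‖ :=
    (norm_sub_le_norm_sub_add_norm_sub _ (S p) _).trans (by gcongr; exact hS x hx p hp)
  have hSx2 : ‖S x - p‖ ^ 2 ≤ ‖x - p‖ ^ 2 + 3 * d * ‖S p - p‖ := by
    have := pow_le_pow_left₀ (norm_nonneg _) hSx 2
    nlinarith [norm_nonneg (x - p), norm_nonneg (S p - p)]
  have hcontr : q ^ 2 * ‖S x - p‖ ^ 2 ≤ q * ‖x - p‖ ^ 2 + 3 * d * ‖S p - p‖ := by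
    have hd : 0 ≤ 3 * d * ‖S p - p‖ := by nlinarith [norm_nonneg (S p - p)]
    calc q ^ 2 * ‖S x - p‖ ^ 2 ≤ q * ‖S x - p‖ ^ 2 := by
          gcongr; nlinarith
      _ ≤ q * (‖x - p‖ ^ 2 + 3 * d * ‖S p - p‖) := by gcongr
      _ ≤ q * ‖x - p‖ ^ 2 + 3 * d * ‖S p - p‖ := by nlinarith
  have hcross : ⟪G (S x) - S x, G p - p⟫ ≤ d ^ 2 := by
    have hGd := hbd _ (hGC hp) p hp
    refine (real_inner_le_norm _ _).trans ?_
    rw [sq]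
    gcongr
    · exact (norm_nonneg _).trans hGd
    · exact hbd _ (hGC (hSC hx)) _ (hSC hx)
  have := norm_convex_step_sub_sq_le hl0 hl1 (hG _ (hSC hx) p hp)
  nlinarith [mul_le_mul_of_nonneg_left hip hl0, mul_le_mul_of_nonneg_left hcross (sq_nonneg l),
    mul_le_mul_of_nonneg_left hld hl0,
    mul_nonneg (mul_nonneg hl0 (sub_nonneg.mpr hτ1)) (sq_nonneg ε)]

lemma convex_step_iterate_mem {C : Set H} (hcv : Convex ℝ C) {S : ℕ → H → H}
    (hS : ∀ n, Set.MapsTo (S n) C C) {G : H → H} (hG : Set.MapsTo G C C) {l : ℕ → ℝ}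
    (hl : ∀ n, l n ∈ Set.Icc (0 : ℝ) 1) {u : ℕ → H} (hu0 : u 0 ∈ C)
    (hrec : ∀ n, u (n + 1) = (1 - l (n + 1)) • S n (u n) + l (n + 1) • G (S n (u n))) :
    ∀ n, u n ∈ C
  | 0 => hu0
  | n + 1 => by
    have hSu := hS n (convex_step_iterate_mem hcv hS hG hl hu0 hrec n)
    rw [hrec n]
    exact hcv hSu (hG hSu) (sub_nonneg.mpr (hl _).2) (hl _).1 (sub_add_cancel _ _)

end

theorem hsdm_family_core_lemma_general
    {H : Type*} [NormedAddCommGroup H] [InnerProductSpace ℝ H]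
    (d : ℕ) (hd : 1 ≤ d)
    (C : Set H) (hcv : Convex ℝ C)
    (hbd : ∀ x ∈ C, ∀ y ∈ C, ‖x - y‖ ≤ (d : ℝ))
    (N : ℕ) (hN : 1 ≤ N) (T : ℕ → H → H)
    (hTm : ∀ i ∈ Finset.Icc 1 N, Set.MapsTo (T i) C C)
    (hT : ∀ i ∈ Finset.Icc 1 N, ∀ x ∈ C, ∀ y ∈ C, ‖T i x - T i y‖ ≤ ‖x - y‖)
    (τ : ℝ) (hτ0 : 0 ≤ τ) (hτ1 : τ < 1)
    (G : H → H) (hGm : Set.MapsTo G C C)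
    (hG : ∀ x ∈ C, ∀ y ∈ C, ‖G x - G y‖ ≤ τ * ‖x - y‖)
    (lam : ℕ → ℝ) (hlam : ∀ n, lam n ∈ Set.Ioc (0 : ℝ) 1)
    (χ : ℕ → ℕ) (hχ : ∀ k : ℕ, 1 ≤ k → ∀ n ≥ χ k, lam n ≤ 1 / (k : ℝ))
    (φ₃ : ℝ → ℕ → ℕ)
    (hφ₃ge : ∀ δ : ℝ, 0 < δ → ∀ n : ℕ, n ≤ φ₃ δ n)
    (hφ₃ : ∀ δ : ℝ, 0 < δ → ∀ n : ℕ, ∀ m ≥ φ₃ δ n,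
      ∏ i ∈ Finset.Icc n m, (1 - lam i * (1 - τ)) ≤ δ)
    (u : ℕ → H) (hu0 : u 0 ∈ C)
    (hrec : ∀ n, u (n + 1) = (1 - lam (n + 1)) • T (cyc N (n + 1)) (u n) +
      lam (n + 1) • G (T (cyc N (n + 1)) (u n)))
    (ustar : H) (hustar : ustar ∈ C)
    (ε : ℝ) (hε : 0 < ε) (n₀ : ℕ) (g : ℕ → ℕ)
    (hn₀ : χ ⌈36 * (d : ℝ) ^ 2 / ((1 - τ) * ε ^ 2)⌉₊ ≤ n₀)
    (hip : ∀ n ∈ Finset.Ico n₀ (gTil g (φ₃ (ε ^ 2 / (3 * (d : ℝ) ^ 2)) (n₀ + 1))),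
      ⟪T (cyc N (n + 1)) (u n) - ustar, G ustar - ustar⟫ ≤ (1 - τ) * ε ^ 2 / 8)
    (hfixdef : ∀ n ∈ Finset.Ico n₀ (gTil g (φ₃ (ε ^ 2 / (3 * (d : ℝ) ^ 2)) (n₀ + 1))),
      ‖T (cyc N (n + 1)) ustar - ustar‖ ≤
        ε ^ 2 / (18 * (d : ℝ) *
          ((max (gTil g (φ₃ (ε ^ 2 / (3 * (d : ℝ) ^ 2)) (n₀ + 1)) - n₀) 1 : ℕ) : ℝ))) :
    ‖u (gTil g (φ₃ (ε ^ 2 / (3 * (d : ℝ) ^ 2)) (n₀ + 1))) - ustar‖ ≤ ε := by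
  set δ := ε ^ 2 / (3 * (d : ℝ) ^ 2)
  set ñ := gTil g (φ₃ δ (n₀ + 1))
  have hd0 : (0 : ℝ) < d := by exact_mod_cast hd
  have hδ : 0 < δ := by positivity
  have hφñ : φ₃ δ (n₀ + 1) ≤ ñ := le_max_left _ _
  have hn₀ñ : n₀ ≤ ñ := by linarith [hφ₃ge δ hδ (n₀ + 1)]
  have hTc (n : ℕ) := hTm _ (cyc_mem_Icc hN (n + 1))
  have huC :=
    convex_step_iterate_mem hcv hTc hGm (fun n => Set.Ioc_subset_Icc_self (hlam n)) hu0 hrec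
  have hld : ∀ n ≥ n₀, lam (n + 1) * d ^ 2 ≤ (1 - τ) * ε ^ 2 / 36 := fun n hn => by
    have := mul_le_of_le_one_div_ceil (a := 36 * d ^ 2) (b := (1 - τ) * ε ^ 2) (by positivity)
      (by bound) (hχ _ (Nat.one_le_ceil_iff.mpr (by bound)) (n + 1) (by omega))
    linarith
  have hstep : ∀ n ∈ Ico n₀ ñ, ‖u (n + 1) - ustar‖ ^ 2 ≤ (1 - lam (n + 1) * (1 - τ)) *
      ‖u n - ustar‖ ^ 2 + 3 * d * ‖T (cyc N (n + 1)) ustar - ustar‖ +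
      lam (n + 1) * (1 - τ) * (ε ^ 2 / 3) := fun n hn => by
    rw [hrec n]
    exact norm_hsdm_step_sub_sq_le hbd (hTc n) (hT _ (cyc_mem_Icc hN (n + 1))) hGm hG (huC n)
      hustar (hlam _).1.le (hlam _).2 hτ0 hτ1.le (hip n hn) (hld n (mem_Ico.mp hn).1)
  have hunroll := le_prod_mul_add_sum_of_le_one_sub_mul_add
    (a := fun n => ‖u n - ustar‖ ^ 2) (w := fun n => lam n * (1 - τ)) hn₀ñ
    (fun n => mul_nonneg (hlam n).1.le (by linarith))
    (fun n => by nlinarith [(hlam n).1, (hlam n).2]) (fun n => by positivity) hstep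
  have hP0 : 0 ≤ ∏ i ∈ Icc (n₀ + 1) ñ, (1 - lam i * (1 - τ)) :=
    prod_nonneg fun i _ => by nlinarith [(hlam i).2]
  have hPδ := hφ₃ δ hδ (n₀ + 1) ñ hφñ
  have hdefect : ∑ n ∈ Ico n₀ ñ, ‖T (cyc N (n + 1)) ustar - ustar‖ ≤ ε ^ 2 / (18 * d) :=
    sum_le_of_le_div_max_card (by positivity) fun n hn => by
      rw [Nat.card_Ico, div_div]; exact hfixdef n hn
  have hδd : δ * d ^ 2 = ε ^ 2 / 3 := by simp only [δ]; field_simp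
  have h3d : 3 * (d : ℝ) * (ε ^ 2 / (18 * d)) = ε ^ 2 / 6 := by field_simp; ring
  have hu₀ := pow_le_pow_left₀ (norm_nonneg _) (hbd _ (huC n₀) _ hustar) 2
  rw [← mul_sum] at hunroll
  refine (pow_le_pow_iff_left₀ (norm_nonneg _) hε.le two_ne_zero).mp ?_
  nlinarith [mul_le_mul hPδ hu₀ (sq_nonneg _) hδ.le, mul_le_mul_of_nonneg_left hdefect hd0.le]

/-- Quantitative core lemma for the hybrid steepest descent method with a finite family:
smallness conditions up to `ñ := g̃(φ₃(ε²/(3d²), n₀ + 1))` force `‖u_ñ − u*‖ ≤ ε`. -/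
theorem hsdm_family_core_lemma
    {H : Type*} [NormedAddCommGroup H] [InnerProductSpace ℝ H] [CompleteSpace H]
    (d : ℕ) (hd : 1 ≤ d)
    (C : Set H) (hne : C.Nonempty) (hcl : IsClosed C) (hcv : Convex ℝ C)
    (hbd : ∀ x ∈ C, ∀ y ∈ C, ‖x - y‖ ≤ (d : ℝ))
    (N : ℕ) (hN : 1 ≤ N) (T : ℕ → H → H)
    (hTm : ∀ i ∈ Finset.Icc 1 N, Set.MapsTo (T i) C C)
    (hT : ∀ i ∈ Finset.Icc 1 N, ∀ x ∈ C, ∀ y ∈ C, ‖T i x - T i y‖ ≤ ‖x - y‖)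
    (τ : ℝ) (hτ0 : 0 ≤ τ) (hτ1 : τ < 1)
    (G : H → H) (hGm : Set.MapsTo G C C)
    (hG : ∀ x ∈ C, ∀ y ∈ C, ‖G x - G y‖ ≤ τ * ‖x - y‖)
    (lam : ℕ → ℝ) (hlam : ∀ n, lam n ∈ Set.Ioc (0 : ℝ) 1)
    (χ : ℕ → ℕ) (hχ : ∀ k : ℕ, 1 ≤ k → ∀ n ≥ χ k, lam n ≤ 1 / (k : ℝ))
    (φ₃ : ℝ → ℕ → ℕ)
    (hφ₃ge : ∀ δ : ℝ, 0 < δ → ∀ n : ℕ, n ≤ φ₃ δ n)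
    (hφ₃ : ∀ δ : ℝ, 0 < δ → ∀ n : ℕ, ∀ m ≥ φ₃ δ n,
      ∏ i ∈ Finset.Icc n m, (1 - lam i * (1 - τ)) ≤ δ)
    (u : ℕ → H) (hu0 : u 0 ∈ C)
    (hrec : ∀ n, u (n + 1) = (1 - lam (n + 1)) • T (cyc N (n + 1)) (u n) +
      lam (n + 1) • G (T (cyc N (n + 1)) (u n)))
    (ustar : H) (hustar : ustar ∈ C)
    (ε : ℝ) (hε : 0 < ε) (n₀ : ℕ) (g : ℕ → ℕ)
    (hn₀ : χ ⌈36 * (d : ℝ) ^ 2 / ((1 - τ) * ε ^ 2)⌉₊ ≤ n₀)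
    (hip : ∀ n ∈ Finset.Ico n₀ (gTil g (φ₃ (ε ^ 2 / (3 * (d : ℝ) ^ 2)) (n₀ + 1))),
      ⟪T (cyc N (n + 1)) (u n) - ustar, G ustar - ustar⟫ ≤ (1 - τ) * ε ^ 2 / 8)
    (hfixdef : ∀ n ∈ Finset.Ico n₀ (gTil g (φ₃ (ε ^ 2 / (3 * (d : ℝ) ^ 2)) (n₀ + 1))),
      ‖T (cyc N (n + 1)) ustar - ustar‖ ≤
        ε ^ 2 / (18 * (d : ℝ) *
          ((max (gTil g (φ₃ (ε ^ 2 / (3 * (d : ℝ) ^ 2)) (n₀ + 1)) - n₀) 1 : ℕ) : ℝ))) :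
    ‖u (gTil g (φ₃ (ε ^ 2 / (3 * (d : ℝ) ^ 2)) (n₀ + 1))) - ustar‖ ≤ ε :=
  hsdm_family_core_lemma_general d hd C hcv hbd N hN T hTm hT τ hτ0 hτ1 G hGm hG lam hlam χ hχ φ₃
    hφ₃ge hφ₃ u hu0 hrec ustar hustar ε hε n₀ g hn₀ hip hfixdef
end
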